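/- arXiv:2008.09366 — 9 statements merged into one kernel-verified Lean document; each statement's English description precedes it below -/
import Mathlib

section
/- Let E := Σ_{h=1}^k σ_h·∂_h and U_{−1} := Σ_{h=0}^{k−1} (k−h)·σ_h·∂_{h+1} (σ₀ = 1) in the Weyl algebra. Then [U_{−1}, E] = k·∂₁. -/
lemma weyl_aux {W : Type*} [Ring W] (A B C F e f : W)
    (h1 : A * C = C * A) (h2 : B * F = F * B)
    (he : B * C = C * B + e) (hf : F * A = A * F + f) :
    A * B * (C * F) - C * F * (A * B) = A * e * F - C * f * B := by
  calc A * B * (C * F) - C * F * (A * B)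
      = A * (B * C) * F - C * (F * A) * B := by noncomm_ring
    _ = A * (C * B + e) * F - C * (A * F + f) * B := by rw [he, hf]
    _ = (A * C) * (B * F) - (C * A) * (F * B) + (A * e * F - C * f * B) := by
        noncomm_ring
    _ = A * e * F - C * f * B := by rw [h1, h2, sub_self, zero_add]

/-- In the Weyl algebra, `[U₋₁, E] = k·∂₁` where `E = Σ_{h=1}^k σ_h ∂_h` and
`U₋₁ = Σ_{h=0}^{k−1} (k−h) σ_h ∂_{h+1}` with `σ₀ = 1`. -/
theorem commutator_Um1_E
    (k : ℕ) (hk : 0 < k) (W : Type*) [Ring W] [Algebra ℂ W] (σ D : ℕ → W)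
    (hσ0 : σ 0 = 1)
    (hσσ : ∀ i j, σ i * σ j = σ j * σ i)
    (hDD : ∀ i j, D i * D j = D j * D i)
    (hDσ : ∀ i j, 1 ≤ i → i ≤ k → 1 ≤ j → j ≤ k →
      D i * σ j - σ j * D i = if i = j then (1 : W) else 0) :
    let E : W := ∑ h ∈ Finset.Icc 1 k, σ h * D h
    let Um1 : W := ∑ h ∈ Finset.range k, (k - h) • (σ h * D (h + 1))
    Um1 * E - E * Um1 = k • D 1 := by
  intro E Um1
  have hUE : Um1 * E = ∑ h ∈ Finset.range k, ∑ m ∈ Finset.Icc 1 k,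
      (k - h) • ((σ h * D (h+1)) * (σ m * D m)) := by
    simp only [Um1, E, Finset.sum_mul, Finset.mul_sum, smul_mul_assoc]
    rw [Finset.sum_comm]
  have hEU : E * Um1 = ∑ h ∈ Finset.range k, ∑ m ∈ Finset.Icc 1 k,
      (k - h) • ((σ m * D m) * (σ h * D (h+1))) := by
    simp only [Um1, E, Finset.sum_mul, Finset.mul_sum, Finset.smul_sum, mul_smul_comm]
  have key : Um1 * E - E * Um1 = ∑ h ∈ Finset.range k, ∑ m ∈ Finset.Icc 1 k,
      (k - h) • ((σ h * D (h+1)) * (σ m * D m) - (σ m * D m) * (σ h * D (h+1))) := by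
    rw [hUE, hEU, ← Finset.sum_sub_distrib]
    refine Finset.sum_congr rfl fun h _ => ?_
    rw [← Finset.sum_sub_distrib]
    exact Finset.sum_congr rfl fun m _ => (smul_sub _ _ _).symm
  rw [key]
  have comm : ∀ h ∈ Finset.range k, ∀ m ∈ Finset.Icc 1 k,
      (σ h * D (h+1)) * (σ m * D m) - (σ m * D m) * (σ h * D (h+1))
      = (if h+1 = m then σ h * D m else 0)
        - (if m = h then σ h * D (h+1) else 0) := by
    intro h hh m hm
    simp only [Finset.mem_range] at hh
    simp only [Finset.mem_Icc] at hm
    have e1 : D (h+1) * σ m = σ m * D (h+1) + (if h+1 = m then (1:W) else 0) := by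
      have := hDσ (h+1) m (Nat.le_add_left 1 h) hh hm.1 hm.2
      rw [← this]; abel
    have e2 : D m * σ h = σ h * D m + (if m = h then (1:W) else 0) := by
      rcases Nat.eq_zero_or_pos h with h0 | h1
      · subst h0
        have hm0 : m ≠ 0 := by omega
        simp [hσ0, hm0]
      · have := hDσ m h hm.1 hm.2 h1 (le_of_lt hh)
        rw [← this]; abel
    have := weyl_aux (σ h) (D (h+1)) (σ m) (D m)
      (if h+1 = m then (1:W) else 0) (if m = h then (1:W) else 0)
      (hσσ h m) (hDD (h+1) m) e1 e2
    rw [this]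
    by_cases hc : m = h
    · subst hc
      have : ¬ (m + 1 = m) := by omega
      simp [this]
    · by_cases hc2 : h + 1 = m
      · subst hc2
        simp [hc]
      · simp [hc, hc2]
  calc ∑ h ∈ Finset.range k, ∑ m ∈ Finset.Icc 1 k,
        (k - h) • ((σ h * D (h+1)) * (σ m * D m) - (σ m * D m) * (σ h * D (h+1)))
      = ∑ h ∈ Finset.range k,
          (k - h) • (σ h * D (h+1) - if h ∈ Finset.Icc 1 k then σ h * D (h+1) else 0) := by
        refine Finset.sum_congr rfl fun h hh => ?_
        rw [← Finset.smul_sum]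
        congr 1
        rw [Finset.sum_congr rfl (comm h hh), Finset.sum_sub_distrib,
          Finset.sum_ite_eq, Finset.sum_ite_eq']
        congr 1
        have : h + 1 ∈ Finset.Icc 1 k := by
          simp only [Finset.mem_range] at hh
          simp only [Finset.mem_Icc]; omega
        simp [this]
    _ = k • D 1 := by
        rw [Finset.sum_eq_single_of_mem 0 (Finset.mem_range.2 hk)]
        · simp [hσ0]
        · intro h hh hne
          have : h ∈ Finset.Icc 1 k := by
            simp only [Finset.mem_range] at hh
            simp only [Finset.mem_Icc]; omega
          simp [this]
end

section
/- For h ∈ [2, k], the operator T^h := ∂₁∂_{h−1} + ∂_h·E (where E = Σ_{j=1}^k σ_j·∂_j) satisfies [U_{−1}, T^h] = −(k−h)·T^{h+1} + (k−1)·(∂₁∂_h − ∂₂∂_{h−1}), where U_{−1} = Σ_{p=0}^{k−1} (k−p)·σ_p·∂_{p+1} with σ₀ = 1 (interpreting T^{k+1} via the same formula with ∂_{k+1} := 0). -/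
/-- In the Weyl algebra, for `h ∈ [2, k]`,
`[U₋₁, T^h] = −(k−h)·T^{h+1} + (k−1)·(∂₁∂_h − ∂₂∂_{h−1})`, where
`T^m = ∂₁∂_{m−1} + ∂_m E`, `E = Σ_{j=1}^k σ_j ∂_j`,
`U₋₁ = Σ_{p=0}^{k−1} (k−p) σ_p ∂_{p+1}` (`σ₀ = 1`, `∂_{k+1} = 0`). -/
theorem commutator_Um1_T
    (k : ℕ) (hk : 0 < k) (W : Type*) [Ring W] [Algebra ℂ W] (σ D : ℕ → W)
    (hσ0 : σ 0 = 1) (hDk1 : D (k + 1) = 0)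
    (hσσ : ∀ i j, σ i * σ j = σ j * σ i)
    (hDD : ∀ i j, D i * D j = D j * D i)
    (hDσ : ∀ i j, 1 ≤ i → i ≤ k → 1 ≤ j → j ≤ k →
      D i * σ j - σ j * D i = if i = j then (1 : W) else 0) :
    let E : W := ∑ j ∈ Finset.Icc 1 k, σ j * D j
    let T : ℕ → W := fun m => D 1 * D (m - 1) + D m * E
    let Um1 : W := ∑ p ∈ Finset.range k, (k - p) • (σ p * D (p + 1))
    ∀ h, 2 ≤ h → h ≤ k →
      Um1 * T h - T h * Um1 =
        -((k - h) • T (h + 1)) + (k - 1) • (D 1 * D h - D 2 * D (h - 1)) := by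
  intro E T Um1 h hh2 hhk
  have hE : E = ∑ j ∈ Finset.Icc 1 k, σ j * D j := rfl
  have hT : ∀ m, T m = D 1 * D (m - 1) + D m * E := fun _ => rfl
  have hU : Um1 = ∑ p ∈ Finset.range k, (k - p) • (σ p * D (p + 1)) := rfl
  -- commutator of Um1 with D i
  have hUD : ∀ i, 1 ≤ i → i ≤ k → Um1 * D i - D i * Um1 = -((k - i) • D (i + 1)) := by
    intro i hi1 hik
    have step : ∀ p ∈ Finset.range k,
        (k - p) • (σ p * D (p + 1)) * D i - D i * ((k - p) • (σ p * D (p + 1)))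
          = if i = p then -((k - p) • D (p + 1)) else 0 := by
      intro p hp
      rw [Finset.mem_range] at hp
      have key : σ p * D (p + 1) * D i - D i * (σ p * D (p + 1))
          = if i = p then -D (p + 1) else 0 := by
        rcases Nat.eq_zero_or_pos p with h0 | hp1
        · subst h0
          rw [hσ0, one_mul, if_neg (by omega), hDD 1 i]
          exact sub_self _
        · have h1 : σ p * D (p + 1) * D i = σ p * D i * D (p + 1) := by
            rw [mul_assoc, hDD (p + 1) i, ← mul_assoc]
          rw [h1, ← mul_assoc, ← sub_mul, ← neg_sub, hDσ i p hi1 hik hp1 hp.le]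
          split <;> simp
      rw [smul_mul_assoc, mul_smul_comm, ← smul_sub, key]
      split <;> simp
    calc Um1 * D i - D i * Um1
        = ∑ p ∈ Finset.range k,
            ((k - p) • (σ p * D (p + 1)) * D i - D i * ((k - p) • (σ p * D (p + 1)))) := by
          rw [hU, Finset.sum_mul, Finset.mul_sum, ← Finset.sum_sub_distrib]
      _ = ∑ p ∈ Finset.range k, (if i = p then -((k - p) • D (p + 1)) else 0) :=
          Finset.sum_congr rfl step
      _ = -((k - i) • D (i + 1)) := by
          rw [Finset.sum_ite_eq]
          rcases lt_or_eq_of_le hik with h' | h'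
          · rw [if_pos (Finset.mem_range.mpr h')]
          · subst h'
            simp [Finset.mem_range]
  -- commutator of Um1 with σ (q+1)
  have hUσ : ∀ q, q < k → Um1 * σ (q + 1) - σ (q + 1) * Um1 = (k - q) • σ q := by
    intro q hq
    have step : ∀ p ∈ Finset.range k,
        (k - p) • (σ p * D (p + 1)) * σ (q + 1) - σ (q + 1) * ((k - p) • (σ p * D (p + 1)))
          = if q = p then (k - p) • σ p else 0 := by
      intro p hp
      rw [Finset.mem_range] at hp
      have key : σ p * D (p + 1) * σ (q + 1) - σ (q + 1) * (σ p * D (p + 1))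
          = if q = p then σ p else 0 := by
        have h1 : σ (q + 1) * (σ p * D (p + 1)) = σ p * (σ (q + 1) * D (p + 1)) := by
          rw [← mul_assoc, hσσ (q + 1) p, mul_assoc]
        rw [h1, mul_assoc, ← mul_sub,
          hDσ (p + 1) (q + 1) (by omega) (by omega) (by omega) (by omega)]
        by_cases hqp : q = p
        · simp [hqp]
        · rw [if_neg (by omega), if_neg hqp, mul_zero]
      rw [smul_mul_assoc, mul_smul_comm, ← smul_sub, key]
      split <;> simp
    calc Um1 * σ (q + 1) - σ (q + 1) * Um1
        = ∑ p ∈ Finset.range k,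
            ((k - p) • (σ p * D (p + 1)) * σ (q + 1)
              - σ (q + 1) * ((k - p) • (σ p * D (p + 1)))) := by
          rw [hU, Finset.sum_mul, Finset.mul_sum, ← Finset.sum_sub_distrib]
      _ = ∑ p ∈ Finset.range k, (if q = p then (k - p) • σ p else 0) :=
          Finset.sum_congr rfl step
      _ = (k - q) • σ q := by
          rw [Finset.sum_ite_eq, if_pos (Finset.mem_range.mpr hq)]
  -- commutator of Um1 with E
  have prod_rule : ∀ x y : W, Um1 * (x * y) - x * y * Um1
      = (Um1 * x - x * Um1) * y + x * (Um1 * y - y * Um1) := by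
    intro x y; noncomm_ring
  have hUE : Um1 * E - E * Um1 = k • D 1 := by
    have hE' : E = ∑ q ∈ Finset.range k, σ (1 + q) * D (1 + q) := by
      rw [hE, ← Finset.Ico_add_one_right_eq_Icc, Finset.sum_Ico_eq_sum_range]
      simp
    calc Um1 * E - E * Um1
        = ∑ q ∈ Finset.range k,
            (Um1 * (σ (1 + q) * D (1 + q)) - σ (1 + q) * D (1 + q) * Um1) := by
          rw [hE', Finset.mul_sum, Finset.sum_mul, ← Finset.sum_sub_distrib]
      _ = ∑ q ∈ Finset.range k,
            (((k - q) • σ q) * D (q + 1) + σ (q + 1) * (-((k - (q + 1)) • D (q + 1 + 1)))) := by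
          refine Finset.sum_congr rfl fun q hq => ?_
          rw [Finset.mem_range] at hq
          rw [prod_rule, Nat.add_comm 1 q, hUσ q hq, hUD (q + 1) (by omega) (by omega)]
      _ = Um1 + (k • D 1 - Um1) := by
          rw [Finset.sum_add_distrib]
          congr 1
          · rw [hU]
            exact Finset.sum_congr rfl fun q _ => smul_mul_assoc _ _ _
          · calc ∑ q ∈ Finset.range k, σ (q + 1) * (-((k - (q + 1)) • D (q + 1 + 1)))
                = ∑ q ∈ Finset.range k, -((k - (q + 1)) • (σ (q + 1) * D (q + 1 + 1))) := by
                  refine Finset.sum_congr rfl fun q _ => ?_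
                  rw [mul_neg, mul_smul_comm]
              _ = -∑ q ∈ Finset.range k, (k - (q + 1)) • (σ (q + 1) * D (q + 1 + 1)) := by
                  rw [Finset.sum_neg_distrib]
              _ = -(Um1 - k • D 1) := by
                  congr 1
                  have h1 : ∑ q ∈ Finset.range (k + 1), (k - q) • (σ q * D (q + 1))
                      = (∑ q ∈ Finset.range k, (k - (q + 1)) • (σ (q + 1) * D (q + 1 + 1)))
                        + (k - 0) • (σ 0 * D (0 + 1)) :=
                    Finset.sum_range_succ' (fun q => (k - q) • (σ q * D (q + 1))) k
                  have h2 : ∑ q ∈ Finset.range (k + 1), (k - q) • (σ q * D (q + 1))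
                      = Um1 + (k - k) • (σ k * D (k + 1)) := by
                    rw [hU]; exact Finset.sum_range_succ _ k
                  rw [Nat.sub_self, zero_smul, add_zero] at h2
                  rw [h2, hσ0, one_mul, Nat.sub_zero] at h1
                  exact (eq_sub_of_add_eq h1.symm)
              _ = k • D 1 - Um1 := neg_sub _ _
      _ = k • D 1 := by abel
  -- assemble
  have e1 := hUD 1 le_rfl (by omega)
  have e2 := hUD (h - 1) (by omega) (by omega)
  rw [show h - 1 + 1 = h from by omega] at e2
  have e3 := hUD h (by omega) hhk
  rw [show ((1:ℕ) + 1) = 2 from rfl] at e1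
  have expand : Um1 * (D 1 * D (h - 1) + D h * E) - (D 1 * D (h - 1) + D h * E) * Um1
      = ((Um1 * D 1 - D 1 * Um1) * D (h - 1) + D 1 * (Um1 * D (h - 1) - D (h - 1) * Um1))
        + ((Um1 * D h - D h * Um1) * E + D h * (Um1 * E - E * Um1)) := by
    noncomm_ring
  rw [hT h, hT (h + 1), Nat.add_sub_cancel, expand, e1, e2, e3, hUE]
  obtain ⟨a, rfl⟩ : ∃ a, k = h + a := ⟨k - h, by omega⟩
  obtain ⟨b, rfl⟩ : ∃ b, h = b + 2 := ⟨h - 2, by omega⟩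
  rw [show b + 2 + a - 1 = a + b + 1 from by omega,
    show b + 2 + a - (b + 2 - 1) = a + 1 from by omega,
    show b + 2 + a - (b + 2) = a from by omega,
    show b + 2 - 1 = b + 1 from by omega]
  simp only [neg_smul, neg_mul, smul_mul_assoc, mul_neg, mul_smul_comm, hDD (b + 2) 1]
  module
end

section
/- For p ∈ [1, k−1] and q ∈ [2, k], the operators A_{p,q} := ∂_p∂_q − ∂_{p+1}∂_{q−1} and U₀ := Σ_{h=1}^k h·σ_h·∂_h satisfy [U₀, A_{p,q}] = −(p+q)·A_{p,q}. -/
/-- Key commutator: `[U₀, ∂_i ∂_j] = -(i+j) ∂_i ∂_j`. -/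
theorem commutator_U0_DD {W : Type*} [Ring W] (k : ℕ) (σ D : ℕ → W)
    (hDD : ∀ i j, D i * D j = D j * D i)
    (hDσ : ∀ i j, 1 ≤ i → i ≤ k → 1 ≤ j → j ≤ k →
      D i * σ j - σ j * D i = if i = j then (1 : W) else 0)
    (i j : ℕ) (hi1 : 1 ≤ i) (hik : i ≤ k) (hj1 : 1 ≤ j) (hjk : j ≤ k) :
    (∑ h ∈ Finset.Icc 1 k, h • (σ h * D h)) * (D i * D j)
      - (D i * D j) * (∑ h ∈ Finset.Icc 1 k, h • (σ h * D h))
      = -((i + j) • (D i * D j)) := by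
  rw [Finset.sum_mul, Finset.mul_sum, ← Finset.sum_sub_distrib]
  have main : ∀ h ∈ Finset.Icc 1 k,
      h • (σ h * D h) * (D i * D j) - (D i * D j) * (h • (σ h * D h))
        = -((if h = i then i • (D i * D j) else 0)
            + (if h = j then j • (D i * D j) else 0)) := by
    intro h hh
    simp only [Finset.mem_Icc] at hh
    have comm : ∀ m, 1 ≤ m → m ≤ k →
        σ h * D h * D m = D m * (σ h * D h) - (if h = m then D h else 0) := by
      intro m hm1 hmk
      have hc := hDσ m h hm1 hmk hh.1 hh.2
      have hc' : (if m = h then (1 : W) else 0) = (if h = m then (1 : W) else 0) := by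
        simp [eq_comm]
      have hσm : σ h * D m = D m * σ h - (if h = m then (1 : W) else 0) := by
        rw [← hc', ← hc]; abel
      calc σ h * D h * D m = (σ h * D m) * D h := by
            rw [mul_assoc, hDD h m, ← mul_assoc]
        _ = (D m * σ h - (if h = m then (1 : W) else 0)) * D h := by rw [hσm]
        _ = D m * (σ h * D h) - (if h = m then D h else 0) := by
            rw [sub_mul, mul_assoc]
            congr 1
            split <;> simp
    have e1 := comm i hi1 hik
    have e2 := comm j hj1 hjk
    have E1 : (if h = i then D h else 0) * D j = (if h = i then D i * D j else 0) := by
      split_ifs with hh' <;> simp [hh']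
    have E2 : D i * (if h = j then D h else 0) = (if h = j then D i * D j else 0) := by
      split_ifs with hh' <;> simp [hh']
    have step : σ h * D h * (D i * D j)
        = D i * D j * (σ h * D h)
          - ((if h = i then D i * D j else 0) + (if h = j then D i * D j else 0)) := by
      calc σ h * D h * (D i * D j) = (σ h * D h * D i) * D j := (mul_assoc _ _ _).symm
        _ = (D i * (σ h * D h) - (if h = i then D h else 0)) * D j := by rw [e1]
        _ = D i * (σ h * D h * D j) - (if h = i then D h else 0) * D j := by
            rw [sub_mul, mul_assoc]
        _ = D i * (D j * (σ h * D h) - (if h = j then D h else 0))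
              - (if h = i then D h else 0) * D j := by rw [e2]
        _ = _ := by
            rw [mul_sub, E1, E2, ← mul_assoc]
            abel
    have S1 : h • (if h = i then D i * D j else 0) = (if h = i then i • (D i * D j) else 0) := by
      split_ifs with hh' <;> simp [hh']
    have S2 : h • (if h = j then D i * D j else 0) = (if h = j then j • (D i * D j) else 0) := by
      split_ifs with hh' <;> simp [hh']
    calc h • (σ h * D h) * (D i * D j) - (D i * D j) * (h • (σ h * D h))
        = h • (σ h * D h * (D i * D j) - (D i * D j) * (σ h * D h)) := by
          rw [smul_sub, smul_mul_assoc, mul_smul_comm]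
      _ = h • (-((if h = i then D i * D j else 0) + (if h = j then D i * D j else 0))) := by
          rw [step]; congr 1; abel
      _ = -((if h = i then i • (D i * D j) else 0) + (if h = j then j • (D i * D j) else 0)) := by
          rw [smul_neg, smul_add, S1, S2]
  rw [Finset.sum_congr rfl main, Finset.sum_neg_distrib, Finset.sum_add_distrib,
    Finset.sum_ite_eq', Finset.sum_ite_eq']
  simp only [Finset.mem_Icc, hi1, hik, hj1, hjk, and_self, if_true]
  rw [← add_smul]

/-- In the Weyl algebra, for `p ∈ [1, k−1]` and `q ∈ [2, k]`,
`[U₀, A_{p,q}] = −(p+q)·A_{p,q}` where `A_{p,q} = ∂_p∂_q − ∂_{p+1}∂_{q−1}`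
and `U₀ = Σ_{h=1}^k h σ_h ∂_h`. -/
theorem commutator_U0_A
    (k : ℕ) (hk : 0 < k) (W : Type*) [Ring W] [Algebra ℂ W] (σ D : ℕ → W)
    (hσσ : ∀ i j, σ i * σ j = σ j * σ i)
    (hDD : ∀ i j, D i * D j = D j * D i)
    (hDσ : ∀ i j, 1 ≤ i → i ≤ k → 1 ≤ j → j ≤ k →
      D i * σ j - σ j * D i = if i = j then (1 : W) else 0)
    (p q : ℕ) (hp1 : 1 ≤ p) (hpk : p ≤ k - 1) (hq1 : 2 ≤ q) (hqk : q ≤ k) :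
    let U0 : W := ∑ h ∈ Finset.Icc 1 k, h • (σ h * D h)
    let A : W := D p * D q - D (p + 1) * D (q - 1)
    U0 * A - A * U0 = -((p + q) • A) := by
  intro U0 A
  have h1 := commutator_U0_DD k σ D hDD hDσ p q hp1 (by omega) (by omega) hqk
  have h2 := commutator_U0_DD k σ D hDD hDσ (p + 1) (q - 1)
    (by omega) (by omega) (by omega) (by omega)
  have hpq : (p + 1) + (q - 1) = p + q := by omega
  rw [hpq] at h2
  show (∑ h ∈ Finset.Icc 1 k, h • (σ h * D h)) * (D p * D q - D (p + 1) * D (q - 1))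
      - (D p * D q - D (p + 1) * D (q - 1)) * (∑ h ∈ Finset.Icc 1 k, h • (σ h * D h))
      = -((p + q) • (D p * D q - D (p + 1) * D (q - 1)))
  rw [mul_sub, sub_mul, smul_sub]
  have rearr : ∀ (S X1 X2 : W), S * X1 - S * X2 - (X1 * S - X2 * S)
      = (S * X1 - X1 * S) - (S * X2 - X2 * S) := by intro S X1 X2; abel
  rw [rearr, h1, h2]
  abel
end

section
/- For h ∈ [2, k], with T^h := ∂₁∂_{h−1} + ∂_h·E and E := Σ_{j=1}^k σ_j·∂_j, one has [U₀, T^h] = −h·T^h where U₀ = Σ_{j=1}^k j·σ_j·∂_j. -/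
/-- In the Weyl algebra, for `h ∈ [2, k]`, `[U₀, T^h] = −h·T^h` where
`T^h = ∂₁∂_{h−1} + ∂_h E`, `E = Σ_{j=1}^k σ_j ∂_j` and `U₀ = Σ_{j=1}^k j σ_j ∂_j`. -/
theorem commutator_U0_T
    (k : ℕ) (hk : 0 < k) (W : Type*) [Ring W] [Algebra ℂ W] (σ D : ℕ → W)
    (hσσ : ∀ i j, σ i * σ j = σ j * σ i)
    (hDD : ∀ i j, D i * D j = D j * D i)
    (hDσ : ∀ i j, 1 ≤ i → i ≤ k → 1 ≤ j → j ≤ k →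
      D i * σ j - σ j * D i = if i = j then (1 : W) else 0)
    (h : ℕ) (h1 : 2 ≤ h) (h2 : h ≤ k) :
    let E : W := ∑ j ∈ Finset.Icc 1 k, σ j * D j
    let U0 : W := ∑ j ∈ Finset.Icc 1 k, j • (σ j * D j)
    let T : W := D 1 * D (h - 1) + D h * E
    U0 * T - T * U0 = -(h • T) := by
  intro E U0 T
  have hDσ' : ∀ i j, 1 ≤ i → i ≤ k → 1 ≤ j → j ≤ k →
      D i * σ j = σ j * D i + (if i = j then (1 : W) else 0) := by
    intro i j hi1 hi2 hj1 hj2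
    have := hDσ i j hi1 hi2 hj1 hj2
    rw [sub_eq_iff_eq_add] at this
    rw [this, add_comm]
  -- [σ j D j, D i] = - δ_{ij} D i
  have key1 : ∀ i j, i ∈ Finset.Icc 1 k → j ∈ Finset.Icc 1 k →
      (σ j * D j) * D i - D i * (σ j * D j) = if i = j then -(D i) else 0 := by
    intro i j hi hj
    simp only [Finset.mem_Icc] at hi hj
    have hds := hDσ' i j hi.1 hi.2 hj.1 hj.2
    rw [← mul_assoc (D i) (σ j) (D j), hds]
    by_cases hij : i = j
    · subst hij
      simp only [if_pos rfl]
      noncomm_ring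
      simp
    · simp only [if_neg hij, add_zero]
      rw [mul_assoc (σ j) (D j) (D i), hDD j i, ← mul_assoc]
      noncomm_ring
  -- [σ j D j, σ m D m] = 0
  have key2 : ∀ m j, m ∈ Finset.Icc 1 k → j ∈ Finset.Icc 1 k →
      (σ j * D j) * (σ m * D m) - (σ m * D m) * (σ j * D j) = 0 := by
    intro m j hm hj
    simp only [Finset.mem_Icc] at hm hj
    by_cases hjm : j = m
    · subst hjm; exact sub_self _
    · have hmj : ¬ m = j := fun e => hjm e.symm
      have h1 := hDσ' j m hj.1 hj.2 hm.1 hm.2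
      have h2 := hDσ' m j hm.1 hm.2 hj.1 hj.2
      simp only [if_neg hjm, add_zero] at h1
      simp only [if_neg hmj, add_zero] at h2
      have A : σ j * D j * (σ m * D m) = σ j * σ m * (D j * D m) := by
        rw [mul_assoc, ← mul_assoc (D j) (σ m) (D m), h1, mul_assoc (σ m), ← mul_assoc]
      have B : σ m * D m * (σ j * D j) = σ m * σ j * (D m * D j) := by
        rw [mul_assoc, ← mul_assoc (D m) (σ j) (D j), h2, mul_assoc (σ j), ← mul_assoc]
      rw [A, B, hσσ j m, hDD j m, sub_self]
  -- [U0, D i] = - i • D i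
  have keyU : ∀ i, i ∈ Finset.Icc 1 k → U0 * D i - D i * U0 = -(i • D i) := by
    intro i hi
    show (∑ j ∈ Finset.Icc 1 k, j • (σ j * D j)) * D i
        - D i * (∑ j ∈ Finset.Icc 1 k, j • (σ j * D j)) = -(i • D i)
    rw [Finset.sum_mul, Finset.mul_sum, ← Finset.sum_sub_distrib]
    have : ∀ j ∈ Finset.Icc 1 k,
        (j • (σ j * D j)) * D i - D i * (j • (σ j * D j))
          = if i = j then -(j • D i) else 0 := by
      intro j hj
      rw [smul_mul_assoc, mul_smul_comm, ← smul_sub, key1 i j hi hj]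
      split <;> simp
    rw [Finset.sum_congr rfl this, Finset.sum_ite_eq (Finset.Icc 1 k) i fun j => -(j • D i),
      if_pos hi]
  -- [U0, σ m D m] = 0
  have keyU2 : ∀ m, m ∈ Finset.Icc 1 k →
      U0 * (σ m * D m) - (σ m * D m) * U0 = 0 := by
    intro m hm
    show (∑ j ∈ Finset.Icc 1 k, j • (σ j * D j)) * (σ m * D m)
        - (σ m * D m) * (∑ j ∈ Finset.Icc 1 k, j • (σ j * D j)) = 0
    rw [Finset.sum_mul, Finset.mul_sum, ← Finset.sum_sub_distrib]
    apply Finset.sum_eq_zero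
    intro j hj
    rw [smul_mul_assoc, mul_smul_comm, ← smul_sub, key2 m j hm hj, smul_zero]
  -- [U0, E] = 0
  have keyE : U0 * E - E * U0 = 0 := by
    show U0 * (∑ j ∈ Finset.Icc 1 k, σ j * D j)
        - (∑ j ∈ Finset.Icc 1 k, σ j * D j) * U0 = 0
    rw [Finset.mul_sum, Finset.sum_mul, ← Finset.sum_sub_distrib]
    exact Finset.sum_eq_zero keyU2
  -- membership facts
  have hm1 : (1 : ℕ) ∈ Finset.Icc 1 k := Finset.mem_Icc.mpr ⟨le_refl 1, hk⟩
  have hmh : h ∈ Finset.Icc 1 k := Finset.mem_Icc.mpr ⟨le_trans (by norm_num) h1, h2⟩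
  have hmh1 : h - 1 ∈ Finset.Icc 1 k :=
    Finset.mem_Icc.mpr ⟨Nat.le_sub_one_of_lt (lt_of_lt_of_le (by norm_num) h1),
      le_trans (Nat.sub_le h 1) h2⟩
  have c1 := keyU 1 hm1
  have c2 := keyU (h - 1) hmh1
  have ch := keyU h hmh
  have hsum : 1 + (h - 1) = h := by omega
  show U0 * (D 1 * D (h - 1) + D h * E) - (D 1 * D (h - 1) + D h * E) * U0
      = -(h • (D 1 * D (h - 1) + D h * E))
  have e1 : U0 * (D 1 * D (h - 1)) - (D 1 * D (h - 1)) * U0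
      = -(h • (D 1 * D (h - 1))) := by
    have : U0 * (D 1 * D (h - 1)) - (D 1 * D (h - 1)) * U0
        = (U0 * D 1 - D 1 * U0) * D (h - 1) + D 1 * (U0 * D (h - 1) - D (h - 1) * U0) := by
      noncomm_ring
    rw [this, c1, c2, neg_mul, mul_neg, smul_mul_assoc, mul_smul_comm,
      ← neg_add, ← add_smul, hsum]
  have e2 : U0 * (D h * E) - (D h * E) * U0 = -(h • (D h * E)) := by
    have : U0 * (D h * E) - (D h * E) * U0
        = (U0 * D h - D h * U0) * E + D h * (U0 * E - E * U0) := by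
      noncomm_ring
    rw [this, ch, keyE, mul_zero, add_zero, neg_mul, smul_mul_assoc]
  calc U0 * (D 1 * D (h - 1) + D h * E) - (D 1 * D (h - 1) + D h * E) * U0
      = (U0 * (D 1 * D (h - 1)) - (D 1 * D (h - 1)) * U0)
        + (U0 * (D h * E) - (D h * E) * U0) := by noncomm_ring
    _ = -(h • (D 1 * D (h - 1) + D h * E)) := by rw [e1, e2, smul_add, neg_add]
end

section
/- In the Weyl algebra, for p ∈ [1, k−1] and q ∈ [2, k] with also p+1 ≤ k−1 and q+1 ≤ k as needed, one has ∂_q·T^{p+1} − ∂_{p+1}·T^q = A_{p,q}·∂₁, where A_{p,q} = ∂_p∂_q − ∂_{p+1}∂_{q−1} and T^m = ∂₁∂_{m−1} + ∂_m E with E = Σ_{j=1}^k σ_j·∂_j. -/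
/-- In the Weyl algebra, for `p ∈ [1, k−1]` and `q ∈ [2, k]`,
`∂_q·T^{p+1} − ∂_{p+1}·T^q = A_{p,q}·∂₁`, where
`A_{p,q} = ∂_p∂_q − ∂_{p+1}∂_{q−1}`, `T^m = ∂₁∂_{m−1} + ∂_m E`, `E = Σ_{j=1}^k σ_j ∂_j`. -/
theorem partial_T_relation
    (k : ℕ) (hk : 0 < k) (W : Type*) [Ring W] [Algebra ℂ W] (σ D : ℕ → W)
    (hσσ : ∀ i j, σ i * σ j = σ j * σ i)
    (hDD : ∀ i j, D i * D j = D j * D i)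
    (hDσ : ∀ i j, 1 ≤ i → i ≤ k → 1 ≤ j → j ≤ k →
      D i * σ j - σ j * D i = if i = j then (1 : W) else 0)
    (p q : ℕ) (hp1 : 1 ≤ p) (hpk : p ≤ k - 1) (hq1 : 2 ≤ q) (hqk : q ≤ k) :
    let E : W := ∑ j ∈ Finset.Icc 1 k, σ j * D j
    let T : ℕ → W := fun m => D 1 * D (m - 1) + D m * E
    let A : W := D p * D q - D (p + 1) * D (q - 1)
    D q * T (p + 1) - D (p + 1) * T q = A * D 1 := by
  intro E T A
  simp only [Nat.add_sub_cancel, T, A]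
  have h1 : D q * (D 1 * D p) = D p * D q * D 1 := by
    rw [← mul_assoc, hDD q 1, mul_assoc, hDD q p, ← mul_assoc, hDD 1 p, mul_assoc, hDD 1 q,
      ← mul_assoc]
  have h2 : D (p+1) * (D 1 * D (q-1)) = D (p+1) * D (q-1) * D 1 := by
    rw [hDD 1 (q-1), ← mul_assoc]
  have h3 : D q * (D (p+1) * E) = D (p+1) * (D q * E) := by
    rw [← mul_assoc, hDD q (p+1), mul_assoc]
  rw [mul_add, mul_add, h1, h2, h3, sub_mul]
  abel
end

section
/- Let R := ℂ[σ₁,…,σ_k][z]/(P_σ(z)) with P_σ(z) = z^k + Σ_{h=1}^k (−1)^h σ_h z^{k−h}, and let ∂_k denote the derivation of R over ℂ[σ₁,…,σ_{k−1}][z] induced by ∂/∂σ_k (so ∂_k(z)=0, ∂_k(σ_h)=0 for h≠k, ∂_k(σ_k)=1, computed on coordinates in the basis 1,z,…,z^{k−1}). If Q ∈ ℂ[z] has degree at most k−1 and ∂_k applied to the coordinate vector of the class [z^p·Q(z)] ∈ R vanishes for every p ∈ [1, k−1], then Q is a constant. -/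
open Polynomial MvPolynomial

lemma derivative_aeval_pderiv {k : ℕ} (i : Fin k) (F : MvPolynomial (Fin k) ℂ) :
    Polynomial.derivative (MvPolynomial.aeval (fun j => if j = i then (Polynomial.X : Polynomial ℂ) else 0) F)
      = MvPolynomial.aeval (fun j => if j = i then (Polynomial.X : Polynomial ℂ) else 0)
        (MvPolynomial.pderiv i F) := by
  induction F using MvPolynomial.induction_on with
  | C a => simp
  | add p q hp hq => simp [hp, hq]
  | mul_X p j hp =>
    rw [map_mul, Polynomial.derivative_mul, MvPolynomial.pderiv_mul, map_add, map_mul, map_mul, ← hp]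
    by_cases h : j = i <;> simp [h]

lemma aeval_eq_of_pderiv_eq_zero {k : ℕ} (i : Fin k) (F : MvPolynomial (Fin k) ℂ)
    (h : MvPolynomial.pderiv i F = 0) (t : ℂ) :
    MvPolynomial.aeval (fun j => if j = i then t else 0) F
      = MvPolynomial.aeval (fun j => if j = i then (0 : ℂ) else 0) F := by
  have hd := derivative_aeval_pderiv i F
  rw [h, map_zero] at hd
  have hc := Polynomial.eq_C_of_derivative_eq_zero hd
  have key : ∀ s : ℂ, MvPolynomial.aeval (fun j => if j = i then s else 0) F
      = Polynomial.aeval s (MvPolynomial.aeval (fun j => if j = i then (Polynomial.X : Polynomial ℂ) else 0) F) := by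
    intro s
    rw [MvPolynomial.comp_aeval_apply]
    have hfun : (fun j : Fin k => if j = i then s else 0)
        = fun j : Fin k => Polynomial.aeval s (if j = i then (Polynomial.X : Polynomial ℂ) else 0) := by
      funext j
      by_cases hj : j = i <;> simp [hj]
    rw [hfun]
  rw [key t, key 0, hc]
  simp


/-- Let `R = ℂ[σ₁,…,σ_k][z]/(P_σ)` and let `∂_k = ∂/∂σ_k` act on the coordinates in the
basis `1, z, …, z^{k−1}` (coordinates being the coefficients of the reduction mod the
monic polynomial `P_σ`). If `Q ∈ ℂ[z]` has degree at most `k−1` and all coordinates of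
`[z^p·Q(z)]` are killed by `∂_k` for every `p ∈ [1, k−1]`, then `Q` is constant. -/
theorem constant_of_partial_k_vanishing
    (k : ℕ) (hk : 0 < k)
    (Pσ : Polynomial (MvPolynomial (Fin k) ℂ))
    (hPσ : Pσ = Polynomial.X ^ k +
      ∑ i : Fin k,
        Polynomial.C ((-1 : MvPolynomial (Fin k) ℂ) ^ ((i : ℕ) + 1) * MvPolynomial.X i) *
          Polynomial.X ^ (k - ((i : ℕ) + 1)))
    (Q : Polynomial ℂ) (hdeg : Q.natDegree ≤ k - 1)
    (hvan : ∀ p, 1 ≤ p → p ≤ k - 1 → ∀ v : Fin k,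
      MvPolynomial.pderiv (⟨k - 1, by omega⟩ : Fin k)
        (((Polynomial.X ^ p *
            Q.map (MvPolynomial.C : ℂ →+* MvPolynomial (Fin k) ℂ)) %ₘ Pσ).coeff (v : ℕ)) = 0) :
    ∃ c : ℂ, Q = Polynomial.C c := by
  by_cases hQ0 : Q = 0
  · exact ⟨0, by simp [hQ0]⟩
  have i : Fin k := ⟨k - 1, by omega⟩
  -- Pσ is monic of degree k
  have hmonic : Pσ.Monic := by
    rw [hPσ]
    apply Polynomial.monic_X_pow_add
    apply lt_of_le_of_lt (Polynomial.degree_sum_le _ _)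
    rw [Finset.sup_lt_iff (by exact_mod_cast WithBot.bot_lt_coe k)]
    intro b _
    apply lt_of_le_of_lt (Polynomial.degree_mul_le _ _)
    calc (Polynomial.C ((-1 : MvPolynomial (Fin k) ℂ) ^ ((b : ℕ) + 1) * MvPolynomial.X b)).degree
          + (Polynomial.X ^ (k - ((b : ℕ) + 1)) : Polynomial (MvPolynomial (Fin k) ℂ)).degree
        ≤ 0 + (k - ((b : ℕ) + 1) : ℕ) := by
          gcongr
          · exact Polynomial.degree_C_le
          · rw [Polynomial.degree_X_pow]
      _ = ((k - ((b : ℕ) + 1) : ℕ) : WithBot ℕ) := zero_add _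
      _ < (k : WithBot ℕ) := by exact_mod_cast (by omega : k - ((b : ℕ) + 1) < k)
  have hcoeff : ∀ n, 1 ≤ n → Q.coeff n = 0 := by
    intro n hn
    by_cases hnk : k - 1 < n
    · exact Polynomial.coeff_eq_zero_of_natDegree_lt (lt_of_le_of_lt hdeg hnk)
    push_neg at hnk
    have hk2 : 2 ≤ k := by omega
    have key : ∀ t : ℂ,
        Polynomial.map
          ((MvPolynomial.aeval (fun j : Fin k => if j = (⟨k - 1, by omega⟩ : Fin k) then t else 0) :
            MvPolynomial (Fin k) ℂ →ₐ[ℂ] ℂ) : MvPolynomial (Fin k) ℂ →+* ℂ)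
          ((Polynomial.X ^ (k - 1) *
            Q.map (MvPolynomial.C : ℂ →+* MvPolynomial (Fin k) ℂ)) %ₘ Pσ)
        = Polynomial.C ((-1) ^ (k + 1) * t) * Q.divX
            + Polynomial.C (Q.coeff 0) * Polynomial.X ^ (k - 1) := by
      intro t
      set φ := ((MvPolynomial.aeval (fun j : Fin k => if j = (⟨k - 1, by omega⟩ : Fin k) then t else 0) :
            MvPolynomial (Fin k) ℂ →ₐ[ℂ] ℂ) : MvPolynomial (Fin k) ℂ →+* ℂ) with hφ
      rw [Polynomial.map_modByMonic _ hmonic]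
      have hmapP : Pσ.map φ = Polynomial.X ^ k + Polynomial.C ((-1) ^ k * t) := by
        rw [hPσ, Polynomial.map_add, Polynomial.map_pow, Polynomial.map_X, Polynomial.map_sum]
        congr 1
        rw [Finset.sum_eq_single (⟨k - 1, by omega⟩ : Fin k)]
        · simp only [Polynomial.map_mul, Polynomial.map_C, Polynomial.map_pow, Polynomial.map_X]
          have h2 : k - 1 + 1 = k := by omega
          rw [h2, Nat.sub_self, pow_zero, mul_one]
          congr 1
          rw [hφ]
          simp
        · intro b _ hb
          simp [hφ, hb]
        · intro h
          exact absurd (Finset.mem_univ _) h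
      have hid : φ.comp (MvPolynomial.C : ℂ →+* MvPolynomial (Fin k) ℂ) = RingHom.id ℂ := by
        ext a
        simp [hφ]
      have hmapf : (Polynomial.X ^ (k - 1) *
            Q.map (MvPolynomial.C : ℂ →+* MvPolynomial (Fin k) ℂ)).map φ
          = Polynomial.X ^ (k - 1) * Q := by
        rw [Polynomial.map_mul, Polynomial.map_pow, Polynomial.map_X, Polynomial.map_map, hid,
          Polynomial.map_id]
      rw [hmapf, hmapP]
      have hBmonic : (Polynomial.X ^ k + Polynomial.C ((-1 : ℂ) ^ k * t)).Monic :=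
        Polynomial.monic_X_pow_add
          (lt_of_le_of_lt Polynomial.degree_C_le
            (show (0 : WithBot ℕ) < (k : WithBot ℕ) by exact_mod_cast hk))
      refine (Polynomial.div_modByMonic_unique Q.divX _ hBmonic ⟨?_, ?_⟩).2
      · have hQd := Polynomial.X_mul_divX_add Q
        have hpow : (Polynomial.X : Polynomial ℂ) ^ k = Polynomial.X ^ (k - 1) * Polynomial.X := by
          rw [← pow_succ]
          congr 1
          omega
        have hsignC : Polynomial.C ((-1 : ℂ) ^ (k + 1) * t) = -Polynomial.C ((-1 : ℂ) ^ k * t) := by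
          rw [← Polynomial.C_neg]
          congr 1
          rw [pow_succ]
          ring
        linear_combination Polynomial.X ^ (k - 1) * hQd + Q.divX * hpow + Q.divX * hsignC
      · rw [Polynomial.degree_X_pow_add_C (by omega : 0 < k)]
        apply lt_of_le_of_lt (Polynomial.degree_add_le _ _)
        rw [max_lt_iff]
        constructor
        · calc (Polynomial.C ((-1 : ℂ) ^ (k + 1) * t) * Q.divX).degree
              ≤ (Polynomial.C ((-1 : ℂ) ^ (k + 1) * t)).degree + Q.divX.degree :=
                Polynomial.degree_mul_le _ _
            _ ≤ 0 + Q.divX.degree := by gcongr; exact Polynomial.degree_C_le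
            _ = Q.divX.degree := zero_add _
            _ < Q.degree := Polynomial.degree_divX_lt hQ0
            _ ≤ (Q.natDegree : WithBot ℕ) := Polynomial.degree_le_natDegree
            _ < (k : WithBot ℕ) := by exact_mod_cast (by omega : Q.natDegree < k)
        · calc (Polynomial.C (Q.coeff 0) * Polynomial.X ^ (k - 1)).degree
              ≤ (Polynomial.C (Q.coeff 0)).degree + (Polynomial.X ^ (k - 1) : Polynomial ℂ).degree :=
                Polynomial.degree_mul_le _ _
            _ ≤ 0 + ((k - 1 : ℕ) : WithBot ℕ) := by
                gcongr
                · exact Polynomial.degree_C_le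
                · rw [Polynomial.degree_X_pow]
            _ = ((k - 1 : ℕ) : WithBot ℕ) := zero_add _
            _ < (k : WithBot ℕ) := by exact_mod_cast (by omega : k - 1 < k)
    -- use the vanishing hypothesis
    have hv := hvan (k - 1) (by omega) le_rfl ⟨n - 1, by omega⟩
    have heq := aeval_eq_of_pderiv_eq_zero (⟨k - 1, by omega⟩ : Fin k) _ hv ((-1 : ℂ) ^ (k + 1))
    have hc : ∀ t : ℂ,
        (MvPolynomial.aeval (fun j : Fin k => if j = (⟨k - 1, by omega⟩ : Fin k) then t else 0))
          (((Polynomial.X ^ (k - 1) *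
            Q.map (MvPolynomial.C : ℂ →+* MvPolynomial (Fin k) ℂ)) %ₘ Pσ).coeff
              ((⟨n - 1, by omega⟩ : Fin k) : ℕ))
        = (Polynomial.C ((-1) ^ (k + 1) * t) * Q.divX
            + Polynomial.C (Q.coeff 0) * Polynomial.X ^ (k - 1)).coeff (n - 1) := by
      intro t
      rw [← key t, Polynomial.coeff_map]
      rfl
    rw [hc, hc] at heq
    have hxpow : ((Polynomial.X : Polynomial ℂ) ^ (k - 1)).coeff (n - 1) = 0 := by
      rw [Polynomial.coeff_X_pow]
      simp only [if_neg (by omega : ¬ n - 1 = k - 1)]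
    have hdivX : Q.divX.coeff (n - 1) = Q.coeff n := by
      rw [Polynomial.coeff_divX]
      congr 1
      omega
    simp only [Polynomial.coeff_add, Polynomial.coeff_C_mul, hxpow, hdivX, mul_zero, add_zero,
      zero_mul, mul_zero] at heq
    have hsq : ((-1 : ℂ) ^ (k + 1)) * ((-1 : ℂ) ^ (k + 1)) = 1 := by
      rw [← pow_add, Even.neg_one_pow ⟨k + 1, rfl⟩]
    rw [hsq, one_mul] at heq
    exact heq
  refine ⟨Q.coeff 0, ?_⟩
  ext m
  cases m with
  | zero => simp
  | succ m =>
    rw [hcoeff (m + 1) (by omega), Polynomial.coeff_C]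
    simp
end

section
/- Let z₁,…,z_k be the simple roots of the monic polynomial P_σ(z) = z^k + Σ_{h=1}^k (−1)^h σ_h z^{k−h}. Then for m ≥ 0, Σ_{j=1}^k z_j^{m+k−1}/P_σ'(z_j), viewed as a function of σ on the complement of the discriminant, extends to a polynomial DN_m ∈ ℂ[σ₁,…,σ_k] which is monic of degree m in σ₁ (i.e., its coefficient of σ₁^m is 1). -/
open Finset Polynomial

noncomputable def DNpoly (k : ℕ) : ℕ → MvPolynomial (Fin k) ℂ
  | 0 => 1
  | (m+1) => ∑ h : Fin k, (-1 : MvPolynomial (Fin k) ℂ) ^ (h : ℕ) * MvPolynomial.X h *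
      (if (h : ℕ) ≤ m then DNpoly k (m - (h : ℕ)) else 0)
  decreasing_by exact Nat.lt_succ_of_le (Nat.sub_le _ _)

lemma DNpoly_weight (k : ℕ) : ∀ m, ∀ α ∈ (DNpoly k m).support,
    ∑ i : Fin k, ((i : ℕ) + 1) * α i = m := by
  intro m
  induction m using Nat.strong_induction_on with
  | _ m IH =>
    match m with
    | 0 =>
      intro α hα
      rw [DNpoly] at hα
      have : α = 0 := by
        by_contra hne
        exact (MvPolynomial.mem_support_iff.mp hα) (by simp [MvPolynomial.coeff_one, eq_comm, hne])
      simp [this]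
    | (m+1) =>
      intro α hα
      rw [DNpoly] at hα
      -- α is in the support of one of the summands
      have : ∃ h : Fin k, α ∈ ((-1 : MvPolynomial (Fin k) ℂ) ^ (h : ℕ) * MvPolynomial.X h *
          (if (h : ℕ) ≤ m then DNpoly k (m - (h : ℕ)) else 0)).support := by
        by_contra hc
        push_neg at hc
        simp only [MvPolynomial.mem_support_iff, not_not] at hc
        have : MvPolynomial.coeff α (∑ h : Fin k, (-1 : MvPolynomial (Fin k) ℂ) ^ (h : ℕ) *
            MvPolynomial.X h * (if (h : ℕ) ≤ m then DNpoly k (m - (h : ℕ)) else 0)) = 0 := by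
          rw [MvPolynomial.coeff_sum]
          exact Finset.sum_eq_zero fun h _ => hc h
        exact (MvPolynomial.mem_support_iff.mp hα) this
      obtain ⟨h, hh⟩ := this
      by_cases hle : (h : ℕ) ≤ m
      · rw [if_pos hle] at hh
        have h1 : (-1 : MvPolynomial (Fin k) ℂ) ^ (h : ℕ) * MvPolynomial.X h * DNpoly k (m - h)
            = ((-1:ℂ) ^ (h:ℕ)) • (DNpoly k (m - h) * MvPolynomial.X h) := by
          rw [MvPolynomial.smul_eq_C_mul, map_pow, map_neg, map_one]; ring
        rw [h1] at hh
        have hh2 : α ∈ (DNpoly k (m - h) * MvPolynomial.X h).support :=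
          MvPolynomial.support_smul hh
        rw [MvPolynomial.support_mul_X] at hh2
        obtain ⟨β, hβ, rfl⟩ := Finset.mem_map.mp hh2
        have hw := IH (m - h) (Nat.lt_succ_of_le (Nat.sub_le _ _)) β hβ
        have hsing : ∑ i : Fin k, ((i : ℕ) + 1) * (Finsupp.single h 1 : Fin k →₀ ℕ) i
            = (h : ℕ) + 1 := by
          rw [Finset.sum_eq_single h]
          · simp
          · intro b _ hb; simp [Finsupp.single_apply, (Ne.symm hb : ¬ h = b)]
          · simp
        have : ∑ i : Fin k, ((i : ℕ) + 1) * (addRightEmbedding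
            (Finsupp.single h 1) β) i
            = (∑ i : Fin k, ((i : ℕ) + 1) * β i) + ((h : ℕ) + 1) := by
          simp only [addRightEmbedding_apply, Finsupp.add_apply, mul_add,
            Finset.sum_add_distrib, hsing]
        rw [this, hw]
        omega
      · rw [if_neg hle, mul_zero] at hh
        simp at hh

lemma DNpoly_coeff (k : ℕ) (hk : 0 < k) : ∀ m,
    MvPolynomial.coeff (Finsupp.single (⟨0, hk⟩ : Fin k) m) (DNpoly k m) = 1 := by
  intro m
  induction m with
  | zero => rw [DNpoly]; simp
  | succ m IH =>
    rw [DNpoly, MvPolynomial.coeff_sum]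
    set i0 : Fin k := ⟨0, hk⟩
    rw [Finset.sum_eq_single i0]
    · have h0 : ((i0 : ℕ)) = 0 := rfl
      rw [h0, pow_zero, one_mul, if_pos (Nat.zero_le m), Nat.sub_zero]
      have : (Finsupp.single i0 (m+1)) = Finsupp.single i0 1 + Finsupp.single i0 m := by
        rw [← Finsupp.single_add, add_comm]
      rw [this, MvPolynomial.coeff_X_mul, IH]
    · intro h _ hne
      have hx : (-1 : MvPolynomial (Fin k) ℂ) ^ (h : ℕ) * MvPolynomial.X h *
          (if (h : ℕ) ≤ m then DNpoly k (m - (h : ℕ)) else 0)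
          = MvPolynomial.X h * ((-1 : MvPolynomial (Fin k) ℂ) ^ (h : ℕ) *
            (if (h : ℕ) ≤ m then DNpoly k (m - (h : ℕ)) else 0)) := by ring
      rw [hx, MvPolynomial.coeff_X_mul']
      rw [if_neg]
      simp only [Finsupp.mem_support_iff, Finsupp.single_apply]
      simp [Ne.symm hne]
    · intro h; exact absurd (Finset.mem_univ i0) h


lemma lagrange_power_sum (k : ℕ) (hk : 0 < k) (z : Fin k → ℂ) (hinj : Function.Injective z)
    (n : ℕ) (hn : n ≤ k - 1) :
    ∑ i : Fin k, z i ^ n * (∏ j ∈ Finset.univ.erase i, (z i - z j))⁻¹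
      = if n = k - 1 then 1 else 0 := by
  classical
  have hprod_ne : ∀ i : Fin k, (∏ j ∈ Finset.univ.erase i, (z i - z j)) ≠ 0 := by
    intro i
    rw [Finset.prod_ne_zero_iff]
    intro j hj
    have : j ≠ i := (Finset.mem_erase.mp hj).1
    exact sub_ne_zero.mpr fun h => this (hinj h.symm)
  set c : Fin k → ℂ := fun i => z i ^ n * (∏ j ∈ Finset.univ.erase i, (z i - z j))⁻¹ with hc
  set F : Polynomial ℂ := ∑ i : Fin k, Polynomial.C (c i) * Lagrange.nodal (Finset.univ.erase i) z
    with hF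
  have hFdeg : F.natDegree ≤ k - 1 := by
    refine (Polynomial.natDegree_sum_le _ _).trans ?_
    rw [Finset.fold_max_le]
    constructor
    · exact Nat.zero_le _
    · intro i _
      refine (Polynomial.natDegree_C_mul_le _ _).trans ?_
      rw [Lagrange.natDegree_nodal]
      simp [Finset.card_erase_of_mem]
  have hFeval : ∀ l : Fin k, F.eval (z l) = z l ^ n := by
    intro l
    rw [hF, Polynomial.eval_finset_sum]
    rw [Finset.sum_eq_single l]
    · rw [Polynomial.eval_mul, Polynomial.eval_C, Lagrange.eval_nodal, hc]
      simp only []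
      rw [mul_assoc, inv_mul_cancel₀ (hprod_ne l), mul_one]
    · intro i _ hil
      rw [Polynomial.eval_mul, Lagrange.eval_nodal]
      have : ∏ j ∈ Finset.univ.erase i, (z l - z j) = 0 :=
        Finset.prod_eq_zero (Finset.mem_erase.mpr ⟨Ne.symm hil, Finset.mem_univ l⟩) (by simp)
      rw [this, mul_zero]
    · intro h; exact absurd (Finset.mem_univ l) h
  have hFX : F = Polynomial.X ^ n := by
    have hzero : F - Polynomial.X ^ n = 0 := by
      apply Polynomial.eq_zero_of_natDegree_lt_card_of_eval_eq_zero _ hinj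
      · intro i
        simp [hFeval i]
      · calc (F - Polynomial.X ^ n).natDegree
            ≤ max F.natDegree (Polynomial.X ^ n : Polynomial ℂ).natDegree :=
              Polynomial.natDegree_sub_le _ _
          _ < Fintype.card (Fin k) := by
              rw [Fintype.card_fin, Polynomial.natDegree_X_pow]
              omega
    exact sub_eq_zero.mp hzero
  have hcoeff : F.coeff (k - 1) = ∑ i : Fin k, c i := by
    rw [hF, Polynomial.finset_sum_coeff]
    congr 1
    funext i
    rw [Polynomial.coeff_C_mul]
    have hmonic : (Lagrange.nodal (Finset.univ.erase i) z).Monic := Lagrange.nodal_monic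
    have hdeg : (Lagrange.nodal (Finset.univ.erase i) z).natDegree = k - 1 := by
      rw [Lagrange.natDegree_nodal]
      simp [Finset.card_erase_of_mem]
    rw [← hdeg, hmonic.coeff_natDegree, mul_one]
  rw [hFX, Polynomial.coeff_X_pow] at hcoeff
  rw [← hcoeff]
  simp [eq_comm]

lemma DNpoly_eval (k : ℕ) (hk : 0 < k) (σ z : Fin k → ℂ) (hinj : Function.Injective z)
    (hroot : ∀ i, (z i) ^ k +
      ∑ j : Fin k, (-1 : ℂ) ^ ((j : ℕ) + 1) * σ j * (z i) ^ (k - ((j : ℕ) + 1)) = 0) :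
    ∀ m, MvPolynomial.eval σ (DNpoly k m)
      = ∑ i : Fin k, z i ^ (m + k - 1) * (∏ j ∈ Finset.univ.erase i, (z i - z j))⁻¹ := by
  classical
  set V : ℕ → ℂ := fun n => ∑ i : Fin k, z i ^ n * (∏ j ∈ Finset.univ.erase i, (z i - z j))⁻¹
    with hV
  have hbase : ∀ n ≤ k - 1, V n = if n = k - 1 then 1 else 0 := fun n hn =>
    lagrange_power_sum k hk z hinj n hn
  have hzk : ∀ i, z i ^ k = ∑ h : Fin k, (-1 : ℂ) ^ (h : ℕ) * σ h * z i ^ (k - ((h : ℕ) + 1)) := by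
    intro i
    have := hroot i
    have h2 : z i ^ k = -∑ j : Fin k, (-1 : ℂ) ^ ((j : ℕ) + 1) * σ j * z i ^ (k - ((j:ℕ)+1)) := by
      linear_combination this
    rw [h2, ← Finset.sum_neg_distrib]
    refine Finset.sum_congr rfl fun h _ => ?_
    rw [pow_succ]
    ring
  have hrec : ∀ n : ℕ, V (n + k)
      = ∑ h : Fin k, (-1 : ℂ) ^ (h : ℕ) * σ h * V (n + (k - ((h : ℕ) + 1))) := by
    intro n
    have : ∀ i : Fin k, z i ^ (n + k)
        = ∑ h : Fin k, (-1 : ℂ) ^ (h : ℕ) * σ h * z i ^ (n + (k - ((h : ℕ) + 1))) := by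
      intro i
      rw [pow_add, hzk i, Finset.mul_sum]
      refine Finset.sum_congr rfl fun h _ => ?_
      rw [pow_add]
      ring
    simp only [hV]
    calc (∑ i : Fin k, z i ^ (n + k) * (∏ j ∈ Finset.univ.erase i, (z i - z j))⁻¹)
        = ∑ i : Fin k, ∑ h : Fin k, (-1 : ℂ) ^ (h : ℕ) * σ h *
            (z i ^ (n + (k - ((h : ℕ) + 1))) * (∏ j ∈ Finset.univ.erase i, (z i - z j))⁻¹) := by
          refine Finset.sum_congr rfl fun i _ => ?_
          rw [this i, Finset.sum_mul]
          exact Finset.sum_congr rfl fun h _ => by ring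
      _ = ∑ h : Fin k, ∑ i : Fin k, (-1 : ℂ) ^ (h : ℕ) * σ h *
            (z i ^ (n + (k - ((h : ℕ) + 1))) * (∏ j ∈ Finset.univ.erase i, (z i - z j))⁻¹) :=
          Finset.sum_comm
      _ = ∑ h : Fin k, (-1 : ℂ) ^ (h : ℕ) * σ h *
            ∑ i : Fin k, z i ^ (n + (k - ((h : ℕ) + 1))) *
              (∏ j ∈ Finset.univ.erase i, (z i - z j))⁻¹ := by
          refine Finset.sum_congr rfl fun h _ => ?_
          rw [Finset.mul_sum]
  -- main induction
  intro m
  induction m using Nat.strong_induction_on with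
  | _ m IH =>
    match m with
    | 0 =>
      rw [DNpoly, map_one]
      have h0 : (0 + k - 1) = k - 1 := by omega
      rw [show (∑ i : Fin k, z i ^ (0 + k - 1) * (∏ j ∈ Finset.univ.erase i, (z i - z j))⁻¹)
          = V (0 + k - 1) from rfl, h0, hbase (k-1) le_rfl, if_pos rfl]
    | (m+1) =>
      rw [show (∑ i : Fin k, z i ^ (m + 1 + k - 1) * (∏ j ∈ Finset.univ.erase i, (z i - z j))⁻¹)
          = V (m + 1 + k - 1) from rfl]
      have hmk : m + 1 + k - 1 = m + k := by omega
      rw [hmk, hrec m, DNpoly, map_sum]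
      refine Finset.sum_congr rfl fun h _ => ?_
      rw [map_mul, map_mul, map_pow, map_neg, map_one, MvPolynomial.eval_X]
      by_cases hle : (h : ℕ) ≤ m
      · rw [if_pos hle, IH (m - (h : ℕ)) (Nat.lt_succ_of_le (Nat.sub_le _ _))]
        rw [show (∑ i : Fin k, z i ^ (m - (h:ℕ) + k - 1) *
            (∏ j ∈ Finset.univ.erase i, (z i - z j))⁻¹) = V (m - (h:ℕ) + k - 1) from rfl]
        have : m + (k - ((h : ℕ) + 1)) = m - (h : ℕ) + k - 1 := by
          have := h.isLt; omega
        rw [this]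
      · rw [if_neg hle, map_zero, mul_zero]
        have hlt := h.isLt
        have h1 : m + (k - ((h : ℕ) + 1)) ≤ k - 1 := by omega
        have h2 : m + (k - ((h : ℕ) + 1)) ≠ k - 1 := by omega
        rw [hbase _ h1, if_neg h2, mul_zero]


lemma deriv_eq_prod (k : ℕ) (hk : 0 < k) (σ z : Fin k → ℂ) (hinj : Function.Injective z)
    (hroot : ∀ i, (z i) ^ k +
      ∑ j : Fin k, (-1 : ℂ) ^ ((j : ℕ) + 1) * σ j * (z i) ^ (k - ((j : ℕ) + 1)) = 0)
    (i : Fin k) :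
    deriv (fun w : ℂ => w ^ k +
        ∑ j : Fin k, (-1 : ℂ) ^ ((j : ℕ) + 1) * σ j * w ^ (k - ((j : ℕ) + 1))) (z i)
      = ∏ j ∈ Finset.univ.erase i, (z i - z j) := by
  classical
  set T : Polynomial ℂ :=
    ∑ j : Fin k, Polynomial.C ((-1 : ℂ) ^ ((j : ℕ) + 1) * σ j) * Polynomial.X ^ (k - ((j:ℕ)+1))
    with hT
  set Pl : Polynomial ℂ := Polynomial.X ^ k + T with hPl
  have hPleval : ∀ w : ℂ, Pl.eval w
      = w ^ k + ∑ j : Fin k, (-1 : ℂ) ^ ((j : ℕ) + 1) * σ j * w ^ (k - ((j : ℕ) + 1)) := by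
    intro w
    simp [hPl, hT, Polynomial.eval_finset_sum]
  have hTdeg : T.degree < (k : ℕ) := by
    refine lt_of_le_of_lt (Polynomial.degree_sum_le _ _) ?_
    rw [Finset.sup_lt_iff (by exact_mod_cast WithBot.bot_lt_coe k)]
    intro j _
    refine lt_of_le_of_lt (Polynomial.degree_C_mul_X_pow_le _ _) ?_
    have := j.isLt
    exact_mod_cast Nat.sub_lt_of_pos_le (Nat.succ_pos _) (by omega)
  have hdeg : Pl.degree = (k : ℕ) := by
    rw [hPl, Polynomial.degree_add_eq_left_of_degree_lt (by rwa [Polynomial.degree_X_pow]),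
      Polynomial.degree_X_pow]
  have hne : Pl ≠ 0 := fun h => by simp [h] at hdeg
  have hlc : Pl.leadingCoeff = 1 := by
    rw [Polynomial.leadingCoeff, Polynomial.natDegree_eq_of_degree_eq_some hdeg, hPl,
      Polynomial.coeff_add, Polynomial.coeff_X_pow, if_pos rfl,
      Polynomial.coeff_eq_zero_of_degree_lt hTdeg, add_zero]
  have hnodal : Pl = Lagrange.nodal Finset.univ z := by
    have hnd : (Lagrange.nodal Finset.univ z : Polynomial ℂ).degree = (k : ℕ) := by
      rw [Lagrange.degree_nodal]
      simp
    have hsub : Pl - Lagrange.nodal Finset.univ z = 0 := by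
      by_cases h0 : Pl - Lagrange.nodal Finset.univ z = 0
      · exact h0
      apply Polynomial.eq_zero_of_natDegree_lt_card_of_eval_eq_zero _ hinj
      · intro j
        rw [Polynomial.eval_sub, hPleval, hroot j,
          Lagrange.eval_nodal_at_node (Finset.mem_univ j), sub_zero]
      · rw [Fintype.card_fin]
        rw [Polynomial.natDegree_lt_iff_degree_lt h0]
        calc (Pl - Lagrange.nodal Finset.univ z).degree < Pl.degree := by
              apply Polynomial.degree_sub_lt (hdeg.trans hnd.symm) hne
              rw [hlc, Lagrange.nodal_monic]
          _ = (k : ℕ) := hdeg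
    exact sub_eq_zero.mp hsub
  have hfun : (fun w : ℂ => w ^ k +
      ∑ j : Fin k, (-1 : ℂ) ^ ((j : ℕ) + 1) * σ j * w ^ (k - ((j : ℕ) + 1)))
      = fun w => Pl.eval w := by
    funext w; exact (hPleval w).symm
  rw [hfun, Polynomial.deriv, hnodal,
    Lagrange.eval_nodal_derivative_eval_node_eq (Finset.mem_univ i), Lagrange.eval_nodal]


/-- The derived Newton function `σ ↦ Σ_j z_j^{m+k−1}/P_σ'(z_j)` (sum over the simple roots
of `P_σ`) extends to a polynomial `DN_m ∈ ℂ[σ₁,…,σ_k]` of pure weight `m` which is monic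
of degree `m` in `σ₁`. -/
theorem derived_newton_is_polynomial
    (k m : ℕ) (hk : 0 < k) :
    ∃ DN : MvPolynomial (Fin k) ℂ,
      (∀ (σ : Fin k → ℂ) (z : Fin k → ℂ), Function.Injective z →
        (∀ i, (z i) ^ k +
            ∑ j : Fin k, (-1 : ℂ) ^ ((j : ℕ) + 1) * σ j * (z i) ^ (k - ((j : ℕ) + 1)) = 0) →
        MvPolynomial.eval σ DN =
          ∑ i : Fin k, (z i) ^ (m + k - 1) /
            deriv (fun w : ℂ =>
              w ^ k + ∑ j : Fin k, (-1 : ℂ) ^ ((j : ℕ) + 1) * σ j * w ^ (k - ((j : ℕ) + 1)))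
              (z i)) ∧
      (∀ α ∈ DN.support, ∑ i : Fin k, ((i : ℕ) + 1) * α i = m) ∧
      MvPolynomial.coeff (Finsupp.single (⟨0, hk⟩ : Fin k) m) DN = 1 := by
  refine ⟨DNpoly k m, ?_, DNpoly_weight k m, DNpoly_coeff k hk m⟩
  intro σ z hinj hroot
  rw [DNpoly_eval k hk σ z hinj hroot m]
  refine Finset.sum_congr rfl fun i _ => ?_
  rw [deriv_eq_prod k hk σ z hinj hroot i, div_eq_mul_inv]
end

section
/- For m ≥ 1, the derived Newton polynomials satisfy U_{−1}[DN_m] = (m+k−1)·DN_{m−1}, where U_{−1} = k·∂₁ + Σ_{h=1}^{k−1}(k−h)·σ_h·∂_{h+1} and DN_m(σ) = (1/2πi)∮_{|ζ|=R} ζ^{m+k−1}/P_σ(ζ) dζ for R ≫ ||σ||. -/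
set_option maxHeartbeats 1000000


open MvPolynomial

noncomputable def Complex.abs : AbsoluteValue ℂ ℝ :=
  IsAbsoluteValue.toAbsoluteValue (norm : ℂ → ℝ)

@[simp] lemma Complex.norm_eq_abs (z : ℂ) : ‖z‖ = Complex.abs z := rfl

section UmAuxSection
open Finset Metric Complex Filter Real


namespace UmAux

noncomputable def H (k : ℕ) : ℕ → MvPolynomial (Fin k) ℂ
  | 0 => 1
  | (m+1) => ∑ i : Fin k,
      if (i : ℕ) ≤ m then ((-1 : ℂ) ^ (i : ℕ)) • (X i * H k (m - (i : ℕ))) else 0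
  decreasing_by exact Nat.sub_lt_succ m i

noncomputable def U (k' : ℕ) :
    Derivation ℂ (MvPolynomial (Fin (k'+1)) ℂ) (MvPolynomial (Fin (k'+1)) ℂ) :=
  ((k' + 1 : ℂ)) • pderiv (0 : Fin (k'+1)) +
    ∑ i : Fin k',
      ((C ((k' - (i : ℕ) : ℕ) : ℂ) * X i.castSucc : MvPolynomial (Fin (k'+1)) ℂ) •
        pderiv (i.succ : Fin (k'+1)))

lemma U_apply (k' : ℕ) (P : MvPolynomial (Fin (k'+1)) ℂ) :
    U k' P = (k' + 1 : ℂ) • pderiv (0 : Fin (k'+1)) P +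
      ∑ i : Fin k', ((k' - (i : ℕ) : ℕ) : ℂ) • (X i.castSucc * pderiv i.succ P) := by
  have : ∀ (D : Finset (Fin k')) ,
      (∑ i ∈ D, ((C ((k' - (i : ℕ) : ℕ) : ℂ) * X i.castSucc : MvPolynomial (Fin (k'+1)) ℂ) •
        pderiv (i.succ : Fin (k'+1)))) P
      = ∑ i ∈ D, ((k' - (i : ℕ) : ℕ) : ℂ) • (X i.castSucc * pderiv i.succ P) := by
    intro D
    induction D using Finset.induction with
    | empty => simp
    | insert _ _ h ih =>
      rw [Finset.sum_insert h, Finset.sum_insert h, Derivation.add_apply, ih,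
        Derivation.smul_apply]
      congr 1
      rw [smul_eq_mul, smul_eq_C_mul]
      ring
  rw [U, Derivation.add_apply, this, Derivation.smul_apply]

lemma U_X0 (k' : ℕ) : U k' (X (0 : Fin (k'+1))) = C ((k' : ℂ) + 1) := by
  rw [U_apply]
  rw [Finset.sum_eq_zero, add_zero]
  · rw [pderiv_X_self]
    rw [smul_eq_C_mul, mul_one]
  · intro i _
    rw [pderiv_X_of_ne (by simp [Fin.ext_iff]), mul_zero, smul_zero]

lemma U_Xsucc (k' : ℕ) (i : Fin k') :
    U k' (X i.succ) = ((k' - (i : ℕ) : ℕ) : ℂ) • X i.castSucc := by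
  rw [U_apply]
  rw [pderiv_X_of_ne (by simp [Fin.ext_iff]), smul_zero, zero_add]
  rw [Finset.sum_eq_single i]
  · rw [pderiv_X_self, mul_one]
  · intro j _ hj
    rw [pderiv_X_of_ne (by simpa [Fin.ext_iff, Fin.val_succ] using fun h => hj (Fin.ext h.symm)),
      mul_zero, smul_zero]
  · simp

end UmAux

namespace UmAux

lemma H_zero (k : ℕ) : H k 0 = 1 := by rw [H]

lemma H_succ (k M : ℕ) : H k (M+1) = ∑ i : Fin k,
    if (i : ℕ) ≤ M then ((-1 : ℂ) ^ (i : ℕ)) • (X i * H k (M - (i : ℕ))) else 0 := by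
  rw [H]

lemma U_H (k' : ℕ) : ∀ m : ℕ, 1 ≤ m →
    U k' (H (k'+1) m) = ((m + k' : ℕ) : ℂ) • H (k'+1) (m - 1) := by
  intro m
  induction m using Nat.strong_induction_on with
  | _ m IH =>
    intro hm
    obtain ⟨M, rfl⟩ : ∃ M, m = M + 1 := ⟨m - 1, by omega⟩
    have keyD : ∀ i : Fin (k'+1),
        U k' (if (i:ℕ) ≤ M then ((-1:ℂ)^(i:ℕ)) • (X i * H (k'+1) (M - (i:ℕ))) else 0)
        = (if (i:ℕ) ≤ M then ((-1:ℂ)^(i:ℕ)) • (U k' (X i) * H (k'+1) (M - (i:ℕ))) else 0)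
        + (if (i:ℕ)+1 ≤ M then
            ((-1:ℂ)^(i:ℕ) * ((M - (i:ℕ) + k' : ℕ):ℂ)) • (X i * H (k'+1) (M - 1 - (i:ℕ)))
          else 0) := by
      intro i
      by_cases hi : (i:ℕ) ≤ M
      · rw [if_pos hi, if_pos hi, Derivation.map_smul, Derivation.leibniz, smul_eq_mul, smul_eq_mul]
        by_cases hi2 : (i:ℕ)+1 ≤ M
        · rw [if_pos hi2]
          rw [IH (M - (i:ℕ)) (by omega) (by omega)]
          have h1 : M - (i:ℕ) - 1 = M - 1 - (i:ℕ) := by omega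
          simp only [h1]
          rw [smul_add]
          have e1 : ((-1:ℂ)^(i:ℕ)) • (X i * (((M - (i:ℕ) + k' : ℕ):ℂ) • H (k'+1) (M - 1 - (i:ℕ))))
              = ((-1:ℂ)^(i:ℕ) * ((M - (i:ℕ) + k' : ℕ):ℂ)) • (X i * H (k'+1) (M - 1 - (i:ℕ))) := by
            rw [mul_smul_comm, smul_smul]
          have e2 : ((-1:ℂ)^(i:ℕ)) • (H (k'+1) (M - (i:ℕ)) * U k' (X i))
              = ((-1:ℂ)^(i:ℕ)) • (U k' (X i) * H (k'+1) (M - (i:ℕ))) := by rw [mul_comm]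
          rw [e1, e2]
          exact add_comm _ _
        · rw [if_neg hi2, add_zero]
          have h0 : M - (i:ℕ) = 0 := by omega
          rw [h0, H_zero, Derivation.map_one_eq_zero, mul_zero, zero_add, one_mul, mul_one]
      · rw [if_neg hi, if_neg hi, if_neg (by omega), map_zero, add_zero]
    rw [H_succ]
    rw [map_sum]
    rw [Finset.sum_congr rfl (fun i _ => keyD i), Finset.sum_add_distrib]
    -- S1 = first sum, S2 = second sum
    rw [Fin.sum_univ_succ]
    have hT0 : (if ((0 : Fin (k'+1)):ℕ) ≤ M then
        ((-1:ℂ)^((0 : Fin (k'+1)):ℕ)) • (U k' (X 0) * H (k'+1) (M - ((0 : Fin (k'+1)):ℕ)))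
        else 0) = ((k'+1 : ℕ) : ℂ) • H (k'+1) M := by
      rw [if_pos (by simp)]
      simp only [Fin.val_zero, pow_zero, one_smul, Nat.sub_zero, U_X0, smul_eq_C_mul]
      push_cast
      ring
    rw [hT0]
    -- reindex the succ-sum to a castSucc-style sum over Fin (k'+1)
    have hS1 : (∑ i : Fin k',
        (if ((i.succ : Fin (k'+1)):ℕ) ≤ M then
          ((-1:ℂ)^((i.succ : Fin (k'+1)):ℕ)) •
            (U k' (X i.succ) * H (k'+1) (M - ((i.succ : Fin (k'+1)):ℕ)))
        else 0))
        = ∑ j : Fin (k'+1),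
          (if (j:ℕ)+1 ≤ M then
            ((-1:ℂ)^((j:ℕ)) * (-((k' - (j:ℕ) : ℕ) : ℂ))) • (X j * H (k'+1) (M - 1 - (j:ℕ)))
          else 0) := by
      rw [Fin.sum_univ_castSucc (n := k')]
      have hlast : (if ((Fin.last k' : Fin (k'+1)):ℕ)+1 ≤ M then
          ((-1:ℂ)^(((Fin.last k' : Fin (k'+1)):ℕ)) *
            (-((k' - ((Fin.last k' : Fin (k'+1)):ℕ) : ℕ) : ℂ))) •
              (X (Fin.last k') * H (k'+1) (M - 1 - ((Fin.last k' : Fin (k'+1)):ℕ)))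
          else 0) = 0 := by
        simp [Fin.val_last]
      rw [hlast, add_zero]
      apply Finset.sum_congr rfl
      intro i _
      rw [U_Xsucc]
      have hv : ((i.succ : Fin (k'+1)):ℕ) = ((i.castSucc : Fin (k'+1)):ℕ) + 1 := by simp
      rw [hv]
      by_cases hg : ((i.castSucc : Fin (k'+1)):ℕ) + 1 ≤ M
      · rw [if_pos hg, if_pos hg]
        have h2 : M - (((i.castSucc : Fin (k'+1)):ℕ) + 1) = M - 1 - ((i.castSucc : Fin (k'+1)):ℕ) := by
          omega
        rw [h2]
        rw [smul_mul_assoc, smul_smul, pow_succ]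
        ring_nf
        simp only [Fin.coe_castSucc]
      · rw [if_neg hg, if_neg hg]
    rw [hS1]
    -- now everything is sums over Fin (k'+1); combine
    rcases M with _ | N
    · rw [Finset.sum_eq_zero (fun j _ => by rw [if_neg (by omega)]),
        Finset.sum_eq_zero (fun j _ => by rw [if_neg (by omega)]), add_zero, add_zero]
      norm_num
      rw [add_comm (k':ℂ) 1]
    · rw [add_assoc, ← Finset.sum_add_distrib]
      have hcomb : ∀ j : Fin (k'+1),
          ((if (j:ℕ)+1 ≤ N+1 then
            ((-1:ℂ)^((j:ℕ)) * (-((k' - (j:ℕ) : ℕ) : ℂ))) • (X j * H (k'+1) (N+1 - 1 - (j:ℕ)))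
          else 0) +
          (if (j:ℕ)+1 ≤ N+1 then
            ((-1:ℂ)^(j:ℕ) * ((N+1 - (j:ℕ) + k' : ℕ):ℂ)) • (X j * H (k'+1) (N+1 - 1 - (j:ℕ)))
          else 0)) =
          ((N:ℂ)+1) • (if (j:ℕ) ≤ N then ((-1:ℂ)^(j:ℕ)) • (X j * H (k'+1) (N - (j:ℕ))) else 0) := by
        intro j
        by_cases hg : (j:ℕ) ≤ N
        · rw [if_pos (by omega), if_pos (by omega), if_pos hg]
          have hd : N + 1 - 1 - (j:ℕ) = N - (j:ℕ) := by omega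
          rw [hd, ← add_smul, smul_smul]
          congr 1
          have c1 : ((k' - (j:ℕ) : ℕ):ℂ) = (k':ℂ) - ((j:ℕ):ℂ) := by
            rw [Nat.cast_sub (by omega)]
          have c2 : ((N+1 - (j:ℕ) + k' : ℕ):ℂ) = ((N:ℂ)+1) - ((j:ℕ):ℂ) + (k':ℂ) := by
            rw [Nat.cast_add, Nat.cast_sub (by omega)]
            push_cast
            ring
          rw [c1, c2]
          ring
        · rw [if_neg (by omega), if_neg (by omega), if_neg hg, add_zero, smul_zero]
      rw [Finset.sum_congr rfl (fun j _ => hcomb j), ← Finset.smul_sum, ← H_succ]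
      have hfin : (N + 1 + 1 - 1) = N + 1 := by omega
      rw [hfin, ← add_smul]
      congr 1
      push_cast
      ring

end UmAux


namespace UmAux

variable {k : ℕ}

noncomputable def pfun (k : ℕ) (σ : Fin k → ℂ) (ζ : ℂ) : ℂ :=
  ζ ^ k + ∑ j : Fin k, (-1 : ℂ) ^ ((j : ℕ) + 1) * σ j * ζ ^ (k - ((j : ℕ) + 1))

lemma pfun_cont (σ : Fin k → ℂ) : Continuous (pfun k σ) := by
  unfold pfun
  exact (continuous_pow k).add <| continuous_finset_sum _ fun j _ =>
    continuous_const.mul (continuous_pow _)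

lemma pfun_diff (σ : Fin k → ℂ) : Differentiable ℂ (pfun k σ) := by
  unfold pfun
  exact (differentiable_pow k).add <| Differentiable.fun_sum fun j _ =>
    (differentiable_const _).mul (differentiable_pow _)

lemma root_lt (σ : Fin k → ℂ) (hk : 0 < k) {w : ℂ}
    (hw : pfun k σ w = 0) : Complex.abs w < (∑ j, Complex.abs (σ j)) + 1 := by
  set B := ∑ j, Complex.abs (σ j) with hB
  have hB0 : 0 ≤ B := Finset.sum_nonneg fun j _ => (Complex.abs.nonneg _)
  by_contra hcon
  push_neg at hcon
  have h1 : (1 : ℝ) ≤ Complex.abs w := by linarith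
  have hwk : w ^ k = -∑ j : Fin k, (-1 : ℂ) ^ ((j : ℕ) + 1) * σ j * w ^ (k - ((j : ℕ) + 1)) := by
    have := hw
    unfold pfun at this
    linear_combination this
  have hle : Complex.abs w ^ k ≤ B * Complex.abs w ^ (k - 1) := by
    calc Complex.abs w ^ k = Complex.abs (w ^ k) := by rw [map_pow]
    _ = Complex.abs (∑ j : Fin k, (-1 : ℂ) ^ ((j : ℕ) + 1) * σ j * w ^ (k - ((j : ℕ) + 1))) := by
        rw [hwk, map_neg_eq_map]
    _ ≤ ∑ j : Fin k, Complex.abs ((-1 : ℂ) ^ ((j : ℕ) + 1) * σ j * w ^ (k - ((j : ℕ) + 1))) :=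
        Complex.abs.sum_le _ _
    _ ≤ ∑ j : Fin k, Complex.abs (σ j) * Complex.abs w ^ (k - 1) := by
        refine Finset.sum_le_sum fun j _ => ?_
        rw [map_mul, map_mul, map_pow, map_pow, map_neg_eq_map, map_one, one_pow, one_mul]
        exact mul_le_mul_of_nonneg_left
          (pow_le_pow_right₀ h1 (by omega)) (Complex.abs.nonneg _)
    _ = B * Complex.abs w ^ (k - 1) := by rw [← Finset.sum_mul]
  have hpow : Complex.abs w ^ k = Complex.abs w * Complex.abs w ^ (k - 1) := by
    conv_lhs => rw [show k = 1 + (k - 1) by omega, pow_add, pow_one]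
  have hpos : (0:ℝ) < Complex.abs w ^ (k - 1) := by positivity
  rw [hpow] at hle
  have : Complex.abs w ≤ B := le_of_mul_le_mul_right hle hpos
  linarith

lemma pfun_ne (σ : Fin k → ℂ) (hk : 0 < k) {ζ : ℂ}
    (hζ : (∑ j, Complex.abs (σ j)) + 1 ≤ Complex.abs ζ) : pfun k σ ζ ≠ 0 :=
  fun h0 => absurd (root_lt σ hk h0) (not_lt.mpr hζ)

lemma pfun_lower (σ : Fin k → ℂ) (hk : 0 < k) {ζ : ℂ} {R : ℝ}
    (hR : (∑ j, Complex.abs (σ j)) + 1 ≤ R) (hζ : Complex.abs ζ = R) :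
    R ^ (k-1) * (R - (∑ j, Complex.abs (σ j))) ≤ Complex.abs (pfun k σ ζ) := by
  set B := ∑ j, Complex.abs (σ j) with hB
  have hB0 : 0 ≤ B := Finset.sum_nonneg fun j _ => (Complex.abs.nonneg _)
  have h1R : (1:ℝ) ≤ R := by linarith
  have hsum : Complex.abs (∑ j : Fin k, (-1 : ℂ) ^ ((j : ℕ) + 1) * σ j * ζ ^ (k - ((j : ℕ) + 1)))
      ≤ B * R ^ (k-1) := by
    calc _ ≤ ∑ j : Fin k, Complex.abs ((-1 : ℂ) ^ ((j : ℕ) + 1) * σ j * ζ ^ (k - ((j : ℕ) + 1))) :=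
        Complex.abs.sum_le _ _
    _ ≤ ∑ j : Fin k, Complex.abs (σ j) * R ^ (k-1) := by
        refine Finset.sum_le_sum fun j _ => ?_
        rw [map_mul, map_mul, map_pow, map_pow, map_neg_eq_map, map_one, one_pow, one_mul, hζ]
        exact mul_le_mul_of_nonneg_left (pow_le_pow_right₀ h1R (by omega)) (Complex.abs.nonneg _)
    _ = B * R ^ (k-1) := by rw [← Finset.sum_mul]
  have habs : R ^ k - B * R ^ (k-1) ≤ Complex.abs (pfun k σ ζ) := by
    unfold pfun
    calc R ^ k - B * R ^ (k-1)
        ≤ Complex.abs (ζ ^ k)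
          - Complex.abs (∑ j : Fin k, (-1:ℂ)^((j:ℕ)+1) * σ j * ζ ^ (k - ((j:ℕ)+1))) := by
          rw [map_pow, hζ]; linarith
    _ ≤ _ := by
        have h2 := norm_sub_norm_le (ζ ^ k)
          (-(∑ j : Fin k, (-1:ℂ)^((j:ℕ)+1) * σ j * ζ ^ (k - ((j:ℕ)+1))))
        simp only [sub_neg_eq_add, norm_neg, Complex.norm_eq_abs] at h2
        linarith
  have hfact : R ^ k = R * R ^ (k-1) := by
    conv_lhs => rw [show k = 1 + (k - 1) by omega]
    rw [pow_add, pow_one]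
  rw [hfact] at habs
  nlinarith [habs]

end UmAux

namespace UmAux

lemma circleIntegral_add {f g : ℂ → ℂ} {c : ℂ} {R : ℝ}
    (hf : CircleIntegrable f c R) (hg : CircleIntegrable g c R) :
    (∮ z in C(c, R), (f z + g z)) = (∮ z in C(c, R), f z) + ∮ z in C(c, R), g z := by
  simp only [circleIntegral, smul_add]
  exact intervalIntegral.integral_add hf.out hg.out

lemma circleIntegral_sum {ι : Type*} (s : Finset ι) (f : ι → ℂ → ℂ) {c : ℂ} {R : ℝ}
    (h : ∀ i ∈ s, CircleIntegrable (f i) c R) :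
    (∮ z in C(c, R), (∑ i ∈ s, f i z)) = ∑ i ∈ s, ∮ z in C(c, R), f i z := by
  simp only [circleIntegral, Finset.smul_sum]
  rw [intervalIntegral.integral_finset_sum]
  exact fun i hi => (h i hi).out

lemma J_const (σ : Fin k → ℂ) (hk : 0 < k) (e : ℕ) {R' : ℝ}
    (h : (∑ j, Complex.abs (σ j)) + 1 ≤ R') :
    (∮ ζ in C(0, R'), ζ ^ e / pfun k σ ζ)
      = ∮ ζ in C(0, (∑ j, Complex.abs (σ j)) + 1), ζ ^ e / pfun k σ ζ := by
  set B := ∑ j, Complex.abs (σ j) with hB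
  have hB0 : 0 ≤ B := Finset.sum_nonneg fun j _ => Complex.abs.nonneg _
  refine Complex.circleIntegral_eq_of_differentiable_on_annulus_off_countable
    (by positivity) h Set.countable_empty ?_ ?_
  · refine ((continuous_pow e).continuousOn).div (pfun_cont σ).continuousOn ?_
    intro z hz
    refine pfun_ne σ hk ?_
    have := hz.2
    simp only [mem_ball, Complex.dist_eq, sub_zero, not_lt] at this
    exact this
  · intro z hz
    have hz2 : B + 1 ≤ Complex.abs z := by
      have := hz.1.2
      simp only [mem_closedBall, Complex.dist_eq, sub_zero, not_le] at this
      exact this.le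
    exact ((differentiable_pow e).differentiableAt).div
      ((pfun_diff σ).differentiableAt) (pfun_ne σ hk hz2)

lemma J_vanish (σ : Fin k → ℂ) (hk : 0 < k) {e : ℕ} (he : e + 2 ≤ k) :
    (∮ ζ in C(0, (∑ j, Complex.abs (σ j)) + 1), ζ ^ e / pfun k σ ζ) = 0 := by
  set B := ∑ j, Complex.abs (σ j) with hB
  have hB0 : 0 ≤ B := Finset.sum_nonneg fun j _ => Complex.abs.nonneg _
  have key1 : Filter.Tendsto (fun R' : ℝ => ∮ ζ in C(0, R'), ζ ^ e / pfun k σ ζ)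
      Filter.atTop (nhds (∮ ζ in C(0, B + 1), ζ ^ e / pfun k σ ζ)) := by
    refine Filter.Tendsto.congr' ?_ tendsto_const_nhds
    filter_upwards [Filter.eventually_ge_atTop (B + 1)] with R' hR'
    exact (J_const σ hk e hR').symm
  have key2 : Filter.Tendsto (fun R' : ℝ => ∮ ζ in C(0, R'), ζ ^ e / pfun k σ ζ)
      Filter.atTop (nhds 0) := by
    apply squeeze_zero_norm' (a := fun R' : ℝ => 2 * π / (R' - B))
    · filter_upwards [Filter.eventually_ge_atTop (B + 1)] with R' hR'
      have h1R : (1:ℝ) ≤ R' := by linarith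
      have hRB : (1:ℝ) ≤ R' - B := by linarith
      have hbound : ∀ z ∈ sphere (0:ℂ) R', ‖z ^ e / pfun k σ z‖
          ≤ R' ^ e / (R' ^ (k-1) * (R' - B)) := by
        intro z hz
        have hzR : Complex.abs z = R' := by
          simpa [Complex.dist_eq, sub_zero] using hz
        have hlow := pfun_lower σ hk hR' hzR
        have hlow0 : (0:ℝ) < R' ^ (k-1) * (R' - B) := by positivity
        rw [norm_div, Complex.norm_eq_abs, Complex.norm_eq_abs, map_pow, hzR]
        gcongr
      have h2 := circleIntegral.norm_integral_le_of_norm_le_const (c := (0:ℂ))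
        (by positivity : (0:ℝ) ≤ R') hbound
      refine h2.trans ?_
      have hp1 : R' ^ (e+1) ≤ R' ^ (k-1) := pow_le_pow_right₀ h1R (by omega)
      have hne1 : R' ^ (k-1) ≠ 0 := by positivity
      have hne2 : R' - B ≠ 0 := by linarith
      have heq : 2 * π * R' * (R' ^ e / (R' ^ (k-1) * (R' - B)))
          = 2 * π * (R' ^ (e+1) / R' ^ (k-1)) / (R' - B) := by
        rw [pow_succ]
        field_simp
      rw [heq]
      have hle1 : R' ^ (e+1) / R' ^ (k-1) ≤ 1 :=
        (div_le_one (by positivity)).mpr hp1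
      calc 2 * π * (R' ^ (e+1) / R' ^ (k-1)) / (R' - B)
          ≤ 2 * π * 1 / (R' - B) := by
            gcongr
        _ = 2 * π / (R' - B) := by ring
    · apply Filter.Tendsto.div_atTop tendsto_const_nhds
      have : Filter.Tendsto (fun R' : ℝ => R' + -B) Filter.atTop Filter.atTop :=
        Filter.tendsto_atTop_add_const_right _ _ Filter.tendsto_id
      simpa [sub_eq_add_neg] using this
  exact tendsto_nhds_unique key1 key2

end UmAux

namespace UmAux

lemma J_top (σ : Fin k → ℂ) (hk : 0 < k) :
    (∮ ζ in C(0, (∑ j, Complex.abs (σ j)) + 1), ζ ^ (k-1) / pfun k σ ζ)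
      = 2 * π * Complex.I := by
  set B := ∑ j, Complex.abs (σ j) with hB
  have hB0 : 0 ≤ B := Finset.sum_nonneg fun j _ => Complex.abs.nonneg _
  -- the difference integrates to 0
  have hgz0 : (∮ ζ in C(0, B + 1), (ζ ^ (k-1) / pfun k σ ζ - ζ⁻¹)) = 0 := by
    have key1 : Filter.Tendsto (fun R' : ℝ => ∮ ζ in C(0, R'), (ζ ^ (k-1) / pfun k σ ζ - ζ⁻¹))
        Filter.atTop (nhds (∮ ζ in C(0, B + 1), (ζ ^ (k-1) / pfun k σ ζ - ζ⁻¹))) := by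
      refine Filter.Tendsto.congr' ?_ tendsto_const_nhds
      filter_upwards [Filter.eventually_ge_atTop (B + 1)] with R' hR'
      symm
      refine Complex.circleIntegral_eq_of_differentiable_on_annulus_off_countable
        (by positivity) hR' Set.countable_empty ?_ ?_
      · refine ContinuousOn.sub
          (((continuous_pow (k-1)).continuousOn).div (pfun_cont σ).continuousOn ?_) ?_
        · intro z hz
          refine pfun_ne σ hk ?_
          have := hz.2
          simpa [mem_ball, Complex.dist_eq, sub_zero, not_lt] using this
        · refine ContinuousOn.inv₀ continuousOn_id ?_
          intro z hz
          have h2 := hz.2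
          simp only [mem_ball, Complex.dist_eq, sub_zero, not_lt] at h2
          intro h0
          rw [h0] at h2
          simp at h2
          linarith
      · intro z hz
        have hz2 : B + 1 ≤ Complex.abs z := by
          have := hz.1.2
          simp only [mem_closedBall, Complex.dist_eq, sub_zero, not_le] at this
          exact this.le
        have hz0 : z ≠ 0 := by
          intro h0; rw [h0] at hz2; simp at hz2; linarith
        exact (((differentiable_pow (k-1)).differentiableAt).div
          ((pfun_diff σ).differentiableAt) (pfun_ne σ hk hz2)).sub
          (differentiableAt_id.inv hz0)
    have key2 : Filter.Tendsto (fun R' : ℝ => ∮ ζ in C(0, R'), (ζ ^ (k-1) / pfun k σ ζ - ζ⁻¹))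
        Filter.atTop (nhds 0) := by
      apply squeeze_zero_norm' (a := fun R' : ℝ => 2 * π * B / (R' - B))
      · filter_upwards [Filter.eventually_ge_atTop (B + 1)] with R' hR'
        have h1R : (1:ℝ) ≤ R' := by linarith
        have hRB : (1:ℝ) ≤ R' - B := by linarith
        have hbound : ∀ z ∈ sphere (0:ℂ) R', ‖z ^ (k-1) / pfun k σ z - z⁻¹‖
            ≤ B / (R' * (R' - B)) := by
          intro z hz
          have hzR : Complex.abs z = R' := by
            simpa [Complex.dist_eq, sub_zero] using hz
          have hz0 : z ≠ 0 := by
            intro h0; rw [h0] at hzR; simp at hzR; linarith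
          have hp0 : pfun k σ z ≠ 0 := pfun_ne σ hk (by rw [hzR]; linarith)
          have hlow := pfun_lower σ hk hR' hzR
          have hgw : z ^ (k-1) / pfun k σ z - z⁻¹
              = (-(∑ j : Fin k, (-1:ℂ)^((j:ℕ)+1) * σ j * z ^ (k - ((j:ℕ)+1))))
              / (z * pfun k σ z) := by
            have hzk : z ^ k = z ^ (k-1) * z := by
              conv_lhs => rw [show k = (k-1) + 1 by omega]
              rw [pow_succ]
            field_simp
            unfold pfun
            rw [hzk]
            ring
          rw [hgw, norm_div, Complex.norm_eq_abs, Complex.norm_eq_abs, map_neg_eq_map, map_mul]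
          have hnum : Complex.abs (∑ j : Fin k, (-1:ℂ)^((j:ℕ)+1) * σ j * z ^ (k - ((j:ℕ)+1)))
              ≤ B * R' ^ (k-1) := by
            calc _ ≤ ∑ j : Fin k, Complex.abs ((-1 : ℂ) ^ ((j : ℕ) + 1) * σ j * z ^ (k - ((j : ℕ) + 1))) :=
                Complex.abs.sum_le _ _
            _ ≤ ∑ j : Fin k, Complex.abs (σ j) * R' ^ (k-1) := by
                refine Finset.sum_le_sum fun j _ => ?_
                rw [map_mul, map_mul, map_pow, map_pow, map_neg_eq_map, map_one, one_pow,
                  one_mul, hzR]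
                exact mul_le_mul_of_nonneg_left (pow_le_pow_right₀ h1R (by omega))
                  (Complex.abs.nonneg _)
            _ = B * R' ^ (k-1) := by rw [← Finset.sum_mul]
          have hden : R' * (R' ^ (k-1) * (R' - B)) ≤ Complex.abs z * Complex.abs (pfun k σ z) := by
            rw [hzR]
            have := mul_le_mul_of_nonneg_left hlow (by positivity : (0:ℝ) ≤ R')
            linarith
          calc Complex.abs (∑ j : Fin k, (-1:ℂ)^((j:ℕ)+1) * σ j * z ^ (k - ((j:ℕ)+1)))
                / (Complex.abs z * Complex.abs (pfun k σ z))
              ≤ (B * R' ^ (k-1)) / (R' * (R' ^ (k-1) * (R' - B))) := by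
                apply div_le_div₀ (by positivity) hnum (by positivity) hden
            _ = B / (R' * (R' - B)) := by
                rw [mul_comm (R' ^ (k-1)) (R' - B), show R' * ((R' - B) * R' ^ (k-1))
                  = (R' * (R' - B)) * R' ^ (k-1) by ring, mul_div_mul_right _ _ (by positivity)]
        have h2 := circleIntegral.norm_integral_le_of_norm_le_const (c := (0:ℂ))
          (by positivity : (0:ℝ) ≤ R') hbound
        refine h2.trans ?_
        have heq : 2 * π * R' * (B / (R' * (R' - B))) = 2 * π * B / (R' - B) := by
          field_simp
        rw [heq]
      · apply Filter.Tendsto.div_atTop tendsto_const_nhds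
        have : Filter.Tendsto (fun R' : ℝ => R' + -B) Filter.atTop Filter.atTop :=
          Filter.tendsto_atTop_add_const_right _ _ Filter.tendsto_id
        simpa [sub_eq_add_neg] using this
    exact tendsto_nhds_unique key1 key2
  -- integrability of the pieces
  have hR0 : (0:ℝ) < B + 1 := by positivity
  have hcont : ContinuousOn (fun ζ : ℂ => ζ ^ (k-1) / pfun k σ ζ) (sphere 0 (B+1)) := by
    refine ((continuous_pow (k-1)).continuousOn).div (pfun_cont σ).continuousOn ?_
    intro z hz
    have hzR : Complex.abs z = B + 1 := by simpa [Complex.dist_eq, sub_zero] using hz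
    exact pfun_ne σ hk (le_of_eq hzR.symm)
  have hcinv : ContinuousOn (fun ζ : ℂ => ζ⁻¹) (sphere 0 (B+1)) := by
    refine ContinuousOn.inv₀ continuousOn_id ?_
    intro z hz
    have hzR : Complex.abs z = B + 1 := by simpa [Complex.dist_eq, sub_zero] using hz
    intro h0; rw [h0] at hzR; simp at hzR; linarith
  have hi1 : CircleIntegrable (fun ζ : ℂ => ζ ^ (k-1) / pfun k σ ζ) 0 (B+1) :=
    hcont.circleIntegrable hR0.le
  have hi2 : CircleIntegrable (fun ζ : ℂ => ζ⁻¹) 0 (B+1) :=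
    hcinv.circleIntegrable hR0.le
  have hinv : (∮ ζ in C(0, B + 1), (ζ:ℂ)⁻¹) = 2 * π * Complex.I := by
    have := circleIntegral.integral_sub_center_inv (0:ℂ) (R := B+1) (by positivity)
    simpa using this
  have hfin : (∮ ζ in C(0, B + 1), ζ ^ (k-1) / pfun k σ ζ)
      - (∮ ζ in C(0, B + 1), (ζ:ℂ)⁻¹) = 0 := by
    rw [← circleIntegral.integral_sub hi1 hi2]
    exact hgz0
  rw [hinv] at hfin
  linear_combination hfin

end UmAux

namespace UmAux

lemma key_id (σ : Fin k → ℂ) (hk : 0 < k) (M : ℕ) {ζ : ℂ} (hp : pfun k σ ζ ≠ 0) :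
    ζ ^ (M + k) / pfun k σ ζ
      = ζ ^ M + ∑ j : Fin k, ((-1:ℂ)^(j:ℕ) * σ j) * (ζ ^ (M + (k - 1 - (j:ℕ))) / pfun k σ ζ) := by
  have hterm : ∀ j ∈ (univ : Finset (Fin k)),
      (ζ ^ M * ((-1:ℂ) ^ ((j:ℕ)+1) * σ j * ζ ^ (k - ((j:ℕ)+1)))
        + ((-1:ℂ)^(j:ℕ) * σ j) * ζ ^ (M + (k - 1 - (j:ℕ)))) = 0 := by
    intro j _
    have hkj : k - ((j:ℕ)+1) = k - 1 - (j:ℕ) := by omega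
    rw [hkj, pow_add ζ M (k - 1 - (j:ℕ)), pow_succ]
    ring
  have hnum : ζ ^ (M + k) = ζ ^ M * pfun k σ ζ
      + ∑ j : Fin k, ((-1:ℂ)^(j:ℕ) * σ j) * ζ ^ (M + (k - 1 - (j:ℕ))) := by
    unfold pfun
    rw [mul_add, Finset.mul_sum, add_assoc, ← Finset.sum_add_distrib,
      Finset.sum_eq_zero hterm, add_zero, ← pow_add]
  rw [hnum, add_div, mul_div_cancel_right₀ _ hp, Finset.sum_div]
  congr 1
  exact Finset.sum_congr rfl fun j _ => mul_div_assoc _ _ _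

lemma J_rec (σ : Fin k → ℂ) (hk : 0 < k) (M : ℕ) :
    (∮ ζ in C(0, (∑ j, Complex.abs (σ j)) + 1), ζ ^ (M + k) / pfun k σ ζ)
      = ∑ j : Fin k, ((-1:ℂ)^(j:ℕ) * σ j) *
          ∮ ζ in C(0, (∑ j, Complex.abs (σ j)) + 1),
            ζ ^ (M + (k - 1 - (j:ℕ))) / pfun k σ ζ := by
  set B := ∑ j, Complex.abs (σ j) with hB
  have hB0 : 0 ≤ B := Finset.sum_nonneg fun j _ => Complex.abs.nonneg _
  have hR0 : (0:ℝ) ≤ B + 1 := by positivity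
  have hne : ∀ z ∈ sphere (0:ℂ) (B+1), pfun k σ z ≠ 0 := by
    intro z hz
    have hzR : Complex.abs z = B + 1 := by simpa [Complex.dist_eq, sub_zero] using hz
    exact pfun_ne σ hk (le_of_eq hzR.symm)
  have hcong : Set.EqOn (fun ζ : ℂ => ζ ^ (M + k) / pfun k σ ζ)
      (fun ζ : ℂ => ζ ^ M + ∑ j : Fin k,
        ((-1:ℂ)^(j:ℕ) * σ j) * (ζ ^ (M + (k - 1 - (j:ℕ))) / pfun k σ ζ))
      (sphere 0 (B+1)) := fun z hz => key_id σ hk M (hne z hz)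
  rw [circleIntegral.integral_congr hR0 hcong]
  have hiM : CircleIntegrable (fun ζ : ℂ => ζ ^ M) 0 (B+1) :=
    ((continuous_pow M).continuousOn).circleIntegrable hR0
  have hiT : ∀ j : Fin k, CircleIntegrable
      (fun ζ : ℂ => ((-1:ℂ)^(j:ℕ) * σ j) * (ζ ^ (M + (k - 1 - (j:ℕ))) / pfun k σ ζ)) 0 (B+1) := by
    intro j
    refine (ContinuousOn.circleIntegrable hR0 ?_)
    exact continuousOn_const.mul (((continuous_pow _).continuousOn).div
      (pfun_cont σ).continuousOn hne)
  have hiS : CircleIntegrable (fun ζ : ℂ => ∑ j : Fin k,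
      ((-1:ℂ)^(j:ℕ) * σ j) * (ζ ^ (M + (k - 1 - (j:ℕ))) / pfun k σ ζ)) 0 (B+1) := by
    refine (ContinuousOn.circleIntegrable hR0 ?_)
    exact continuousOn_finset_sum _ fun j _ => continuousOn_const.mul
      (((continuous_pow _).continuousOn).div (pfun_cont σ).continuousOn hne)
  rw [circleIntegral_add hiM hiS]
  have h0 : (∮ ζ in C(0, B+1), ζ ^ M) = 0 := by
    have h1 := circleIntegral.integral_sub_zpow_of_ne
      (n := (M:ℤ)) (by omega) 0 0 (B+1)
    have h2 : ∀ ζ : ℂ, (ζ - 0) ^ (M:ℤ) = ζ ^ M := by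
      intro ζ; rw [sub_zero, zpow_natCast]
    calc (∮ ζ in C(0, B+1), ζ ^ M)
        = ∮ ζ in C(0, B+1), (ζ - 0) ^ (M:ℤ) :=
          (circleIntegral.integral_congr hR0 fun z _ => (h2 z).symm)
      _ = 0 := h1
  rw [h0, zero_add, circleIntegral_sum univ _ (fun j _ => hiT j)]
  exact Finset.sum_congr rfl fun j _ => circleIntegral.integral_const_mul _ _ _ _

lemma eval_H (k M : ℕ) (σ : Fin k → ℂ) :
    eval σ (H k (M+1)) = ∑ j : Fin k,
      (if (j:ℕ) ≤ M then (-1:ℂ)^(j:ℕ) * σ j * eval σ (H k (M - (j:ℕ))) else 0) := by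
  rw [H_succ, map_sum]
  refine Finset.sum_congr rfl fun j _ => ?_
  rw [apply_ite (eval σ), map_zero]
  congr 1
  rw [smul_eq_C_mul, map_mul, map_mul, eval_C, eval_X]
  ring

lemma J_eval (hk : 0 < k) (σ : Fin k → ℂ) : ∀ m : ℕ,
    (∮ ζ in C(0, (∑ j, Complex.abs (σ j)) + 1), ζ ^ (m + k - 1) / pfun k σ ζ)
      = 2 * π * Complex.I * eval σ (H k m) := by
  intro m
  induction m using Nat.strong_induction_on with
  | _ m IH =>
    rcases m with _ | M
    · have he : 0 + k - 1 = k - 1 := by omega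
      rw [he, J_top σ hk, H_zero, map_one, mul_one]
    · have he : M + 1 + k - 1 = M + k := by omega
      rw [he, J_rec σ hk M, eval_H, Finset.mul_sum]
      refine Finset.sum_congr rfl fun j _ => ?_
      by_cases hj : (j:ℕ) ≤ M
      · rw [if_pos hj]
        have hexp : M + (k - 1 - (j:ℕ)) = (M - (j:ℕ)) + k - 1 := by
          have := j.isLt; omega
        rw [hexp, IH (M - (j:ℕ)) (by omega)]
        ring
      · rw [if_neg hj]
        have hexp : (M + (k - 1 - (j:ℕ))) + 2 ≤ k := by
          have := j.isLt; omega
        rw [J_vanish σ hk hexp, mul_zero, mul_zero]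

end UmAux


end UmAuxSection

/-- `U₋₁[DN_m] = (m+k−1)·DN_{m−1}` for the derived Newton polynomials, characterized by
`DN_m(σ) = (1/2πi)∮_{|ζ|=R} ζ^{m+k−1}/P_σ(ζ) dζ` for `R` larger than all roots of `P_σ`,
where `U₋₁ = k·∂₁ + Σ_{h=1}^{k−1}(k−h)·σ_h·∂_{h+1}`. -/
theorem Um1_derived_newton
    (k m : ℕ) (hk : 0 < k) (hm : 1 ≤ m)
    (Dm Dm1 : MvPolynomial (Fin k) ℂ)
    (hDm : ∀ (σ : Fin k → ℂ) (R : ℝ),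
      (∀ w : ℂ,
          w ^ k + ∑ j : Fin k, (-1 : ℂ) ^ ((j : ℕ) + 1) * σ j * w ^ (k - ((j : ℕ) + 1)) = 0 →
          ‖w‖ < R) →
      MvPolynomial.eval σ Dm =
        (2 * (Real.pi : ℂ) * Complex.I)⁻¹ *
          ∮ ζ in C(0, R), ζ ^ (m + k - 1) /
            (ζ ^ k + ∑ j : Fin k, (-1 : ℂ) ^ ((j : ℕ) + 1) * σ j * ζ ^ (k - ((j : ℕ) + 1))))
    (hDm1 : ∀ (σ : Fin k → ℂ) (R : ℝ),
      (∀ w : ℂ,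
          w ^ k + ∑ j : Fin k, (-1 : ℂ) ^ ((j : ℕ) + 1) * σ j * w ^ (k - ((j : ℕ) + 1)) = 0 →
          ‖w‖ < R) →
      MvPolynomial.eval σ Dm1 =
        (2 * (Real.pi : ℂ) * Complex.I)⁻¹ *
          ∮ ζ in C(0, R), ζ ^ (m - 1 + k - 1) /
            (ζ ^ k + ∑ j : Fin k, (-1 : ℂ) ^ ((j : ℕ) + 1) * σ j * ζ ^ (k - ((j : ℕ) + 1)))) :
    (k : ℂ) • pderiv (⟨0, hk⟩ : Fin k) Dm +
        ∑ i : Fin k,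
          (if hi : (i : ℕ) + 1 < k then
            ((k - 1 - (i : ℕ) : ℕ) : ℂ) • (X i * pderiv (⟨(i : ℕ) + 1, hi⟩ : Fin k) Dm)
          else 0) =
      ((m + k - 1 : ℕ) : ℂ) • Dm1 := by
  classical
  have hDmH : Dm = UmAux.H k m := by
    apply MvPolynomial.funext
    intro σ
    have hroot : ∀ w : ℂ,
        w ^ k + ∑ j : Fin k, (-1 : ℂ) ^ ((j : ℕ) + 1) * σ j * w ^ (k - ((j : ℕ) + 1)) = 0 →
        Complex.abs w < (∑ j, Complex.abs (σ j)) + 1 := fun w hw => UmAux.root_lt σ hk hw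
    rw [hDm σ _ hroot]
    have hJ := UmAux.J_eval hk σ m
    unfold UmAux.pfun at hJ
    rw [hJ, inv_mul_cancel_left₀ Complex.two_pi_I_ne_zero]
  have hDm1H : Dm1 = UmAux.H k (m - 1) := by
    apply MvPolynomial.funext
    intro σ
    have hroot : ∀ w : ℂ,
        w ^ k + ∑ j : Fin k, (-1 : ℂ) ^ ((j : ℕ) + 1) * σ j * w ^ (k - ((j : ℕ) + 1)) = 0 →
        Complex.abs w < (∑ j, Complex.abs (σ j)) + 1 := fun w hw => UmAux.root_lt σ hk hw
    rw [hDm1 σ _ hroot]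
    have hJ := UmAux.J_eval hk σ (m - 1)
    unfold UmAux.pfun at hJ
    rw [hJ, inv_mul_cancel_left₀ Complex.two_pi_I_ne_zero]
  obtain ⟨K, rfl⟩ : ∃ K, k = K + 1 := ⟨k - 1, by omega⟩
  rw [hDmH, hDm1H]
  have hU := UmAux.U_H K m hm
  rw [UmAux.U_apply] at hU
  have hzero : (⟨0, hk⟩ : Fin (K+1)) = 0 := rfl
  have hsum : (∑ i : Fin (K+1),
      (if hi : (i : ℕ) + 1 < K + 1 then
        ((K + 1 - 1 - (i : ℕ) : ℕ) : ℂ) •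
          (X i * pderiv (⟨(i : ℕ) + 1, hi⟩ : Fin (K+1)) (UmAux.H (K+1) m))
      else 0))
      = ∑ i : Fin K, ((K - (i : ℕ) : ℕ) : ℂ) •
          (X i.castSucc * pderiv i.succ (UmAux.H (K+1) m)) := by
    rw [Fin.sum_univ_castSucc]
    rw [dif_neg (by simp), add_zero]
    refine Finset.sum_congr rfl fun i _ => ?_
    rw [dif_pos (by simpa using i.isLt)]
    have h1 : (K + 1 - 1 - ((i.castSucc : Fin (K+1)) : ℕ) : ℕ) = K - (i : ℕ) := by
      simp
    have h2 : (⟨((i.castSucc : Fin (K+1)) : ℕ) + 1, by simpa using i.isLt⟩ : Fin (K+1))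
        = i.succ := by
      apply Fin.ext
      simp
    rw [h1, h2]
  rw [hzero, hsum]
  have hcast : ((K + 1 : ℕ) : ℂ) = (K : ℂ) + 1 := by push_cast; ring
  have hgoalL : ((K + 1 : ℕ) : ℂ) • pderiv (0 : Fin (K+1)) (UmAux.H (K+1) m) +
      ∑ i : Fin K, ((K - (i : ℕ) : ℕ) : ℂ) •
          (X i.castSucc * pderiv i.succ (UmAux.H (K+1) m))
      = ((m + K : ℕ) : ℂ) • UmAux.H (K+1) (m - 1) := by
    rw [hcast]; exact hU
  have hfin : (m + (K + 1) - 1 : ℕ) = m + K := by omega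
  rw [hfin]
  exact hgoalL
end

section
/- Let A be the k×k companion-type matrix with A_{i,i+1} = 1 for 1 ≤ i ≤ k−1, last row (σ̃_k, σ̃_{k−1}, …, σ̃_1) where σ̃_h = (−1)^{h−1}σ_h, and all other entries 0, regarded as a matrix over ℂ[σ₁,…,σ_k]. Then for each h ∈ [1, k−1]: (−1)^{k+h}·∂_h(A) = (∂_k A)·A^{k−h}, where ∂_h denotes entrywise partial derivative with respect to σ_h. -/
open MvPolynomial

/-- For the companion-type matrix `A` of `P_σ` (ones on the superdiagonal, last row
`(σ̃_k, …, σ̃_1)` with `σ̃_h = (−1)^{h−1}σ_h`), one has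
`(−1)^{k+h}·∂_h(A) = (∂_k A)·A^{k−h}` for `h ∈ [1, k−1]`. -/
theorem companion_matrix_derivative_relation
    (k : ℕ) (hk : 0 < k)
    (A : Matrix (Fin k) (Fin k) (MvPolynomial (Fin k) ℂ))
    (hA : ∀ i j : Fin k, A i j =
      if (i : ℕ) = k - 1 then
        (-1 : MvPolynomial (Fin k) ℂ) ^ (k - 1 - (j : ℕ)) *
          X (⟨k - 1 - (j : ℕ), by omega⟩ : Fin k)
      else if (j : ℕ) = (i : ℕ) + 1 then 1 else 0)
    (h : ℕ) (h1 : 1 ≤ h) (h2 : h ≤ k - 1) :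
    ((-1 : MvPolynomial (Fin k) ℂ) ^ (k + h)) •
        A.map (pderiv (⟨h - 1, by omega⟩ : Fin k)) =
      A.map (pderiv (⟨k - 1, by omega⟩ : Fin k)) * A ^ (k - h) := by
  -- powers of A shift rows
  have hpow : ∀ m : ℕ, ∀ i j : Fin k, (i : ℕ) + m ≤ k - 1 →
      (A ^ m) i j = if (j : ℕ) = (i : ℕ) + m then 1 else 0 := by
    intro m
    induction m with
    | zero =>
      intro i j hij
      simp [Matrix.one_apply, Fin.ext_iff, eq_comm]
    | succ m ih =>
      intro i j hij
      rw [pow_succ, Matrix.mul_apply]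
      have hc : ((⟨(i : ℕ) + m, by omega⟩ : Fin k) : ℕ) = (i : ℕ) + m := rfl
      have hrw : ∀ l : Fin k, (A ^ m) i l * A l j =
          if l = (⟨(i : ℕ) + m, by omega⟩ : Fin k) then A l j else 0 := by
        intro l
        rw [ih i l (by omega)]
        by_cases hl : (l : ℕ) = (i : ℕ) + m
        · rw [if_pos hl, if_pos (by exact Fin.ext hl), one_mul]
        · rw [if_neg hl, if_neg (by simpa [Fin.ext_iff] using hl), zero_mul]
      simp only [hrw]
      rw [Finset.sum_ite_eq' Finset.univ _ (fun l => A l j)]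
      rw [if_pos (Finset.mem_univ _), hA]
      simp only [hc]
      rw [if_neg (by omega)]
      by_cases hj : (j : ℕ) = (i : ℕ) + (m + 1)
      · rw [if_pos (show (j : ℕ) = (i : ℕ) + m + 1 by omega), if_pos hj]
      · rw [if_neg (show ¬((j : ℕ) = (i : ℕ) + m + 1) by omega), if_neg hj]
  -- derivative of the entries
  have hderiv : ∀ (v : ℕ) (hv : v < k) (i j : Fin k),
      pderiv (⟨v, hv⟩ : Fin k) (A i j) =
        if (i : ℕ) = k - 1 ∧ (j : ℕ) = k - 1 - v then
          (-1 : MvPolynomial (Fin k) ℂ) ^ (k - 1 - (j : ℕ)) else 0 := by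
    intro v hv i j
    rw [hA]
    by_cases hi : (i : ℕ) = k - 1
    · rw [if_pos hi]
      rw [pderiv_mul, pderiv_X]
      have hc : pderiv (⟨v, hv⟩ : Fin k) ((-1 : MvPolynomial (Fin k) ℂ) ^ (k - 1 - (j : ℕ))) = 0 := by
        have : ((-1 : MvPolynomial (Fin k) ℂ)) = C (-1) := by simp
        rw [this, ← map_pow, pderiv_C]
      rw [hc, zero_mul, zero_add]
      by_cases hj : (j : ℕ) = k - 1 - v
      · rw [if_pos ⟨hi, hj⟩]
        have : (⟨v, hv⟩ : Fin k) = (⟨k - 1 - (j : ℕ), by omega⟩ : Fin k) := by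
          apply Fin.ext; simp only []; omega
        rw [this, Pi.single_eq_same, mul_one]
      · have : (⟨v, hv⟩ : Fin k) ≠ (⟨k - 1 - (j : ℕ), by omega⟩ : Fin k) := by
          simp only [ne_eq, Fin.ext_iff]; omega
        rw [Pi.single_eq_of_ne' this, mul_zero, if_neg (by tauto)]
    · rw [if_neg hi, if_neg (show ¬((i : ℕ) = k - 1 ∧ (j : ℕ) = k - 1 - v) from
        fun hc => hi hc.1)]
      split
      · simp
      · simp
  ext i j : 2
  rw [Matrix.smul_apply, Matrix.map_apply, Matrix.mul_apply]
  rw [hderiv (h - 1) (by omega) i j]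
  have hrw2 : ∀ l : Fin k, (A.map (pderiv (⟨k - 1, by omega⟩ : Fin k))) i l * (A ^ (k - h)) l j =
      if (i : ℕ) = k - 1 ∧ l = (⟨0, hk⟩ : Fin k) then
        (-1 : MvPolynomial (Fin k) ℂ) ^ (k - 1) * (A ^ (k - h)) l j else 0 := by
    intro l
    rw [Matrix.map_apply, hderiv (k - 1) (by omega) i l]
    by_cases hi : (i : ℕ) = k - 1
    · by_cases hl : (l : ℕ) = k - 1 - (k - 1)
      · rw [if_pos ⟨hi, hl⟩, if_pos ⟨hi, Fin.ext (by simp only [Fin.val_mk]; omega)⟩]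
        congr 2
        omega
      · have hne : ¬((i : ℕ) = k - 1 ∧ l = (⟨0, hk⟩ : Fin k)) := by
          rintro ⟨-, rfl⟩; exact hl (by simp)
        rw [if_neg (fun hc => hl hc.2), if_neg hne, zero_mul]
    · rw [if_neg (show ¬((i : ℕ) = k - 1 ∧ (l : ℕ) = k - 1 - (k - 1)) from
        fun hc => hi hc.1), if_neg (fun hc => hi hc.1), zero_mul]
  simp only [hrw2]
  by_cases hi : (i : ℕ) = k - 1
  · simp only [hi, true_and]
    rw [Finset.sum_ite_eq' Finset.univ (⟨0, hk⟩ : Fin k)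
      (fun l => (-1 : MvPolynomial (Fin k) ℂ) ^ (k - 1) * (A ^ (k - h)) l j),
      if_pos (Finset.mem_univ _)]
    rw [hpow (k - h) (⟨0, hk⟩ : Fin k) j (by simp; omega)]
    simp only [Fin.val_mk, zero_add]
    by_cases hj : (j : ℕ) = k - 1 - (h - 1)
    · rw [if_pos hj, if_pos (by omega), mul_one]
      have hjv : k - 1 - (j : ℕ) = h - 1 := by omega
      rw [hjv, smul_eq_mul, ← pow_add]
      have : k + h + (h - 1) = (k - 1) + 2 * h := by omega
      rw [this, pow_add, pow_mul, neg_one_sq, one_pow, mul_one]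
    · rw [if_neg hj, if_neg (by omega), mul_zero, smul_zero]
  · simp only [hi, false_and, if_false, smul_zero, Finset.sum_const_zero]
end
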